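/- arXiv:2303.03295 — 10 statements merged into one kernel-verified Lean document; each statement's English description precedes it below -/
import Mathlib

section
/- Let N ≥ 1 be an integer, y ∈ ℝ^N with y ≥ 0 componentwise, σ := (1/N)Σ_{i=1}^N y_i, and let ζ ≥ 0, ξ ≥ 0 be reals. Define the symmetric matrix A(y) := 2(σ+ζ)·𝟏𝟏ᵀ + (ξ/N)(y𝟏ᵀ + 𝟏yᵀ), where 𝟏 ∈ ℝ^N is the all-ones vector. Define γ_± := N(σ+ζ) ± √(N²(σ+ζ)² + 2Nξ(σ+ζ)σ + ξ²‖y‖²/N) and λ_± := ξσ + γ_±. Then every eigenvalue of A(y) belongs to the set {0, λ_−, λ_+}. -/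
/-- Every eigenvalue of the rank-≤3 symmetric matrix
`A(y) = 2(σ+ζ)𝟏𝟏ᵀ + (ξ/N)(y𝟏ᵀ + 𝟏yᵀ)` belongs to `{0, λ₋, λ₊}` where
`λ_± = ξσ + γ_±`. -/
theorem stmt_2 (N : ℕ) (hN : 1 ≤ N) (y : Fin N → ℝ) (hy : ∀ i, 0 ≤ y i)
    (ζ ξ : ℝ) (hζ : 0 ≤ ζ) (hξ : 0 ≤ ξ) :
    ∀ μ : ℝ,
      (∃ v : Fin N → ℝ, v ≠ 0 ∧
        (Matrix.of fun i j : Fin N =>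
            2 * ((∑ k, y k) / N + ζ) + (ξ / N) * (y i + y j)).mulVec v = μ • v) →
      μ = 0 ∨
      μ = ξ * ((∑ k, y k) / N) +
            (N * ((∑ k, y k) / N + ζ) -
              Real.sqrt ((N : ℝ) ^ 2 * ((∑ k, y k) / N + ζ) ^ 2 +
                2 * N * ξ * ((∑ k, y k) / N + ζ) * ((∑ k, y k) / N) +
                ξ ^ 2 * (∑ k, (y k) ^ 2) / N)) ∨
      μ = ξ * ((∑ k, y k) / N) +
            (N * ((∑ k, y k) / N + ζ) +
              Real.sqrt ((N : ℝ) ^ 2 * ((∑ k, y k) / N + ζ) ^ 2 +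
                2 * N * ξ * ((∑ k, y k) / N + ζ) * ((∑ k, y k) / N) +
                ξ ^ 2 * (∑ k, (y k) ^ 2) / N)) := by
  rintro μ ⟨v, hv, h⟩
  have hN0 : (N : ℝ) ≠ 0 := by
    have : (0:ℝ) < N := by exact_mod_cast Nat.lt_of_lt_of_le Nat.zero_lt_one hN
    linarith
  set T : ℝ := ∑ k, y k with hT
  set Q : ℝ := ∑ k, (y k) ^ 2 with hQ
  set S : ℝ := ∑ i, v i with hS
  set P : ℝ := ∑ i, y i * v i with hP
  -- row equation, cleared of denominators
  have hrow : ∀ i, (N : ℝ) * (μ * v i) = (2 * (T + N * ζ) + ξ * y i) * S + ξ * P := by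
    intro i
    have hi := congrFun h i
    simp only [Matrix.mulVec, dotProduct, Matrix.of_apply, Pi.smul_apply,
      smul_eq_mul] at hi
    rw [← hi, Finset.mul_sum, hS, hP, Finset.mul_sum, Finset.mul_sum,
      ← Finset.sum_add_distrib]
    refine Finset.sum_congr rfl fun j _ => ?_
    field_simp
    ring
  -- summed equations
  have hSeq : (N : ℝ) * (μ * S) = (2 * (T + N * ζ) * N + ξ * T) * S + ξ * N * P := by
    calc (N : ℝ) * (μ * S) = ∑ i, (N : ℝ) * (μ * v i) := by
          rw [hS, Finset.mul_sum, Finset.mul_sum]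
      _ = ∑ i, ((2 * (T + N * ζ) + ξ * y i) * S + ξ * P) :=
          Finset.sum_congr rfl fun i _ => hrow i
      _ = (2 * (T + N * ζ) * N + ξ * T) * S + ξ * N * P := by
          rw [Finset.sum_add_distrib, ← Finset.sum_mul, Finset.sum_add_distrib,
            Finset.sum_const, ← Finset.mul_sum, ← hT, Finset.sum_const,
            Finset.card_univ, Fintype.card_fin]
          push_cast
          ring
  have hPeq : (N : ℝ) * (μ * P) = (2 * (T + N * ζ) * T + ξ * Q) * S + ξ * T * P := by
    calc (N : ℝ) * (μ * P) = ∑ i, y i * ((N : ℝ) * (μ * v i)) := by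
          rw [hP, Finset.mul_sum, Finset.mul_sum]
          exact Finset.sum_congr rfl fun i _ => by ring
      _ = ∑ i, (y i * ((2 * (T + N * ζ) + ξ * y i) * S + ξ * P)) :=
          Finset.sum_congr rfl fun i _ => by rw [hrow i]
      _ = (2 * (T + N * ζ) * T + ξ * Q) * S + ξ * T * P := by
          have : ∀ i, y i * ((2 * (T + N * ζ) + ξ * y i) * S + ξ * P)
              = (2 * (T + N * ζ) * S + ξ * P) * y i + (ξ * S) * (y i) ^ 2 := by
            intro i; ring
          rw [Finset.sum_congr rfl fun i _ => this i, Finset.sum_add_distrib,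
            ← Finset.mul_sum, ← Finset.mul_sum, ← hT, ← hQ]
          ring
  by_cases hμ0 : μ = 0
  · exact Or.inl hμ0
  have hSP : ¬(S = 0 ∧ P = 0) := by
    rintro ⟨hS0, hP0⟩
    apply hv
    funext i
    have hi := hrow i
    rw [hS0, hP0] at hi
    simp only [mul_zero, add_zero, zero_add] at hi
    have h0 : μ * v i = 0 := by
      rcases mul_eq_zero.mp hi with h' | h'
      · exact absurd h' hN0
      · exact h'
    have hvi : v i = 0 := by
      rcases mul_eq_zero.mp h0 with h' | h'
      · exact absurd h' hμ0
      · exact h'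
    simpa using hvi
  by_cases hS0 : S = 0
  · -- then P ≠ 0, and the equations force ξ = 0 and then μ = 0, contradiction
    have hP0 : P ≠ 0 := fun hp => hSP ⟨hS0, hp⟩
    rw [hS0] at hSeq hPeq
    simp only [mul_zero, zero_add, zero_mul] at hSeq hPeq
    -- hSeq : N * (μ * 0) = ξ * N * P ; careful: μ * 0
    have hξ0 : ξ * N * P = 0 := by linarith [hSeq]
    have hξz : ξ = 0 := by
      rcases mul_eq_zero.mp hξ0 with h1 | h2
      · rcases mul_eq_zero.mp h1 with h3 | h4
        · exact h3
        · exact absurd h4 hN0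
      · exact absurd h2 hP0
    have : (N : ℝ) * (μ * P) = 0 := by rw [hPeq, hξz]; ring
    rcases mul_eq_zero.mp this with h1 | h2
    · exact absurd h1 hN0
    · rcases mul_eq_zero.mp h2 with h3 | h4
      · exact absurd h3 hμ0
      · exact absurd h4 hP0
  · -- main case: S ≠ 0, derive the quadratic
    have h1 : ((N : ℝ) * μ - (2 * (T + N * ζ) * N + ξ * T)) * S = ξ * N * P := by
      linear_combination hSeq
    have h2 : ((N : ℝ) * μ - ξ * T) * P = (2 * (T + N * ζ) * T + ξ * Q) * S := by
      linear_combination hPeq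
    have key : (((N : ℝ) * μ - (2 * (T + N * ζ) * N + ξ * T)) * ((N : ℝ) * μ - ξ * T)
        - ξ * N * (2 * (T + N * ζ) * T + ξ * Q)) * S = 0 := by
      linear_combination ((N : ℝ) * μ - ξ * T) * h1 + (ξ * N) * h2
    have hquad : ((N : ℝ) * μ - (2 * (T + N * ζ) * N + ξ * T)) * ((N : ℝ) * μ - ξ * T)
        - ξ * N * (2 * (T + N * ζ) * T + ξ * Q) = 0 := by
      rcases mul_eq_zero.mp key with h' | h'
      · exact h'
      · exact absurd h' hS0
    set m : ℝ := ξ * (T / N) + N * (T / N + ζ) with hm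
    set D : ℝ := (N : ℝ) ^ 2 * (T / N + ζ) ^ 2 + 2 * N * ξ * (T / N + ζ) * (T / N)
        + ξ ^ 2 * Q / N with hD
    have hmN : (N : ℝ) * m = ξ * T + N * T + (N : ℝ) ^ 2 * ζ := by
      rw [hm]; field_simp; ring
    have hDN : (N : ℝ) ^ 2 * D
        = (N : ℝ) ^ 2 * (T + N * ζ) ^ 2 + 2 * N * ξ * T * (T + N * ζ) + N * ξ ^ 2 * Q := by
      rw [hD]; field_simp
    have hsqN : ((N : ℝ) * μ - (ξ * T + N * T + (N : ℝ) ^ 2 * ζ)) ^ 2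
        = (N : ℝ) ^ 2 * (T + N * ζ) ^ 2 + 2 * N * ξ * T * (T + N * ζ) + N * ξ ^ 2 * Q := by
      linear_combination hquad
    have hsq : (μ - m) ^ 2 = D := by
      refine mul_left_cancel₀ (pow_ne_zero 2 hN0) ?_
      calc (N : ℝ) ^ 2 * (μ - m) ^ 2 = ((N : ℝ) * μ - (N : ℝ) * m) ^ 2 := by ring
        _ = ((N : ℝ) * μ - (ξ * T + N * T + (N : ℝ) ^ 2 * ζ)) ^ 2 := by rw [hmN]
        _ = (N : ℝ) ^ 2 * (T + N * ζ) ^ 2 + 2 * N * ξ * T * (T + N * ζ) + N * ξ ^ 2 * Q :=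
            hsqN
        _ = (N : ℝ) ^ 2 * D := hDN.symm
    have hDs : Real.sqrt D = |μ - m| := by rw [← hsq, Real.sqrt_sq_eq_abs]
    rcases abs_cases (μ - m) with ⟨h1, _⟩ | ⟨h1, _⟩
    · right; right
      have hfin : Real.sqrt D = μ - m := by rw [hDs, h1]
      rw [hm] at hfin
      linarith
    · right; left
      have hfin : Real.sqrt D = -(μ - m) := by rw [hDs, h1]
      rw [hm] at hfin
      linarith
end

section
/- Let N ≥ 1 be an integer, y ∈ ℝ^N with y ≥ 0 componentwise, σ := (1/N)Σ_i y_i, and ζ ≥ 0, ξ ≥ 0 reals. Define A(y) := 2(σ+ζ)𝟏𝟏ᵀ + (ξ/N)(y𝟏ᵀ + 𝟏yᵀ) and γ_± := N(σ+ζ) ± √(N²(σ+ζ)² + 2Nξ(σ+ζ)σ + ξ²‖y‖²/N). Then A(y)·(ξy + γ_+ 𝟏) = (ξσ + γ_+)(ξy + γ_+ 𝟏) and A(y)·(ξy + γ_− 𝟏) = (ξσ + γ_−)(ξy + γ_− 𝟏); that is, ξy + γ_± 𝟏 are eigenvectors of A(y) with eigenvalues ξσ + γ_± respectively. -/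
/-!
Writing `n = #ι`, `S = ∑ yₖ` and `Q = ∑ yₖ²`, the `i`-th entry of `A (ξ y + γ 𝟏)` is an affine
function of `yᵢ`. Its `yᵢ`-coefficient is `ξ (ξ σ + γ)` for every `γ`, so the eigen-equation with
eigenvalue `ξ σ + γ` reduces to its constant term, the quadratic
`γ² = α n (γ + ξ σ) + ξ² Q / n` (here `α = 2 (σ + ζ)`). Its roots are exactly `γ_±`.
-/

open Finset Matrix

theorem Matrix.mulVec_eq_smul_of_sq_eq {K ι : Type*} [Field K] [Fintype ι] {y : ι → K}
    {α ξ γ : K} (hn : (Fintype.card ι : K) ≠ 0)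
    (hγ : γ ^ 2 = α * Fintype.card ι * (γ + ξ * ((∑ k, y k) / Fintype.card ι)) +
      ξ ^ 2 * (∑ k, y k ^ 2) / Fintype.card ι) :
    (of fun i j => α + ξ / Fintype.card ι * (y i + y j)) *ᵥ (fun i => ξ * y i + γ) =
      (ξ * ((∑ k, y k) / Fintype.card ι) + γ) • fun i => ξ * y i + γ := by
  funext i
  have hterm : ∀ j, (α + ξ / Fintype.card ι * (y i + y j)) * (ξ * y j + γ) =
      (α + ξ / Fintype.card ι * y i) * γ + ((α + ξ / Fintype.card ι * y i) * ξ +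
        ξ / Fintype.card ι * γ) * y j + ξ ^ 2 / Fintype.card ι * y j ^ 2 := fun j => by ring
  simp only [mulVec, dotProduct, of_apply, hterm, sum_add_distrib, ← mul_sum, sum_const,
    card_univ, nsmul_eq_mul, Pi.smul_apply, smul_eq_mul]
  field_simp at hγ ⊢
  linear_combination -hγ

/-- The vectors `ξy + γ_± 𝟏` are eigenvectors of
`A(y) = 2(σ+ζ)𝟏𝟏ᵀ + (ξ/N)(y𝟏ᵀ + 𝟏yᵀ)` with eigenvalues `ξσ + γ_±`. -/
theorem stmt_3 (N : ℕ) (hN : 1 ≤ N) (y : Fin N → ℝ) (hy : ∀ i, 0 ≤ y i)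
    (ζ ξ : ℝ) (hζ : 0 ≤ ζ) (hξ : 0 ≤ ξ) :
    ((Matrix.of fun i j : Fin N =>
        2 * ((∑ k, y k) / N + ζ) + (ξ / N) * (y i + y j)).mulVec
      (fun i => ξ * y i +
        (N * ((∑ k, y k) / N + ζ) +
          Real.sqrt ((N : ℝ) ^ 2 * ((∑ k, y k) / N + ζ) ^ 2 +
            2 * N * ξ * ((∑ k, y k) / N + ζ) * ((∑ k, y k) / N) +
            ξ ^ 2 * (∑ k, (y k) ^ 2) / N)))
      = (ξ * ((∑ k, y k) / N) +
          (N * ((∑ k, y k) / N + ζ) +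
            Real.sqrt ((N : ℝ) ^ 2 * ((∑ k, y k) / N + ζ) ^ 2 +
              2 * N * ξ * ((∑ k, y k) / N + ζ) * ((∑ k, y k) / N) +
              ξ ^ 2 * (∑ k, (y k) ^ 2) / N))) •
        (fun i => ξ * y i +
          (N * ((∑ k, y k) / N + ζ) +
            Real.sqrt ((N : ℝ) ^ 2 * ((∑ k, y k) / N + ζ) ^ 2 +
              2 * N * ξ * ((∑ k, y k) / N + ζ) * ((∑ k, y k) / N) +
              ξ ^ 2 * (∑ k, (y k) ^ 2) / N)))) ∧
    ((Matrix.of fun i j : Fin N =>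
        2 * ((∑ k, y k) / N + ζ) + (ξ / N) * (y i + y j)).mulVec
      (fun i => ξ * y i +
        (N * ((∑ k, y k) / N + ζ) -
          Real.sqrt ((N : ℝ) ^ 2 * ((∑ k, y k) / N + ζ) ^ 2 +
            2 * N * ξ * ((∑ k, y k) / N + ζ) * ((∑ k, y k) / N) +
            ξ ^ 2 * (∑ k, (y k) ^ 2) / N)))
      = (ξ * ((∑ k, y k) / N) +
          (N * ((∑ k, y k) / N + ζ) -
            Real.sqrt ((N : ℝ) ^ 2 * ((∑ k, y k) / N + ζ) ^ 2 +
              2 * N * ξ * ((∑ k, y k) / N + ζ) * ((∑ k, y k) / N) +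
              ξ ^ 2 * (∑ k, (y k) ^ 2) / N))) •
        (fun i => ξ * y i +
          (N * ((∑ k, y k) / N + ζ) -
            Real.sqrt ((N : ℝ) ^ 2 * ((∑ k, y k) / N + ζ) ^ 2 +
              2 * N * ξ * ((∑ k, y k) / N + ζ) * ((∑ k, y k) / N) +
              ξ ^ 2 * (∑ k, (y k) ^ 2) / N)))) := by
  have hN0 : (N : ℝ) ≠ 0 := Nat.cast_ne_zero.mpr (by omega)
  have hσ : 0 ≤ (∑ k, y k) / N := div_nonneg (sum_nonneg fun i _ => hy i) N.cast_nonneg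
  have hD : 0 ≤ (N : ℝ) ^ 2 * ((∑ k, y k) / N + ζ) ^ 2 +
      2 * N * ξ * ((∑ k, y k) / N + ζ) * ((∑ k, y k) / N) + ξ ^ 2 * (∑ k, (y k) ^ 2) / N := by
    positivity
  have heigen := fun γ => mulVec_eq_smul_of_sq_eq (y := y) (α := 2 * ((∑ k, y k) / N + ζ))
    (ξ := ξ) (γ := γ)
  simp only [Fintype.card_fin] at heigen
  constructor <;> apply heigen _ hN0 <;> linear_combination Real.sq_sqrt hD
end

section
/- Let N ≥ 1 be an integer and τ, k, ξ, ζ ≥ 0 reals, and define ℓ : [0,∞) → [0,∞) by ℓ(σ) = τ + (k/(ξ+1))(σ+ζ)^{ξ+1}. Define the operator T : ℝ^N → ℝ^N by T(y)_i := ℓ(avg(y)) + (1/N)·y_i·ℓ'(avg(y)), where avg(y) := (1/N)Σ_{j=1}^N y_j and ℓ'(σ) = k(σ+ζ)^ξ. If ζ ≥ max((ξ² − 8)/(8N), (ξ − 2)/(2N)), then T is monotone on [0,1]^N, i.e., ⟨T(x) − T(y), x − y⟩ ≥ 0 for all x, y ∈ [0,1]^N. -/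
open Finset

private lemma le_of_sq_le_sq'' (a b : ℝ) (hb : 0 ≤ b) (h : a^2 ≤ b^2) : a ≤ b := by
  nlinarith

private lemma scalar_key (ξ β m Z : ℝ) (hξ : 0 ≤ ξ) (hβ : 0 ≤ β) (hm : 0 ≤ m)
    (h1 : Z ≤ m) (h2 : Z ≤ m ^ 2) (hZ : 0 ≤ Z)
    (c1 : ξ ^ 2 ≤ 8 * β + 8) (c2 : ξ ≤ 2 * β + 2) :
    ξ ^ 2 * Z ≤ 4 * (m + β) ^ 2 := by
  rcases le_total m 1 with hm1 | hm1
  · have hsq : ξ ^ 2 ≤ (2*β+2)^2 := by nlinarith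
    nlinarith [mul_nonneg hβ hm, mul_nonneg (mul_nonneg hβ hβ) hm,
      mul_nonneg (mul_nonneg hβ hβ) (mul_nonneg hm hm),
      mul_nonneg hβ (mul_nonneg hm hm), sq_nonneg (m - 1), mul_nonneg hβ hβ]
  · rcases le_total β 1 with hb1 | hb1
    · have hsq : ξ ^ 2 ≤ (2*β+2)^2 := by nlinarith
      have key : 0 ≤ (m - 1) * (m - β^2) :=
        mul_nonneg (by linarith) (by nlinarith)
      nlinarith [mul_nonneg hβ hm, sq_nonneg ξ]
    · nlinarith [sq_nonneg (m - β), sq_nonneg ξ, mul_nonneg (sq_nonneg ξ) (sub_nonneg.2 h1)]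

set_option maxHeartbeats 2000000 in
private lemma key (N : ℕ) (hN : 1 ≤ N) (τ k ξ ζ : ℝ)
    (hτ : 0 ≤ τ) (hk : 0 ≤ k) (hξ : 0 ≤ ξ) (hζ : 0 ≤ ζ)
    (c1 : ξ ^ 2 ≤ 8 * (N:ℝ) * ζ + 8) (c2 : ξ ≤ 2 * (N:ℝ) * ζ + 2)
    (x y : Fin N → ℝ)
    (hx : ∀ i, x i ∈ Set.Icc (0 : ℝ) 1) (hy : ∀ i, y i ∈ Set.Icc (0 : ℝ) 1)
    (hle : ∑ j, y j ≤ ∑ j, x j) :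
    0 ≤ ∑ i,
        (((τ + (k / (ξ + 1)) * ((∑ j, x j) / N + ζ) ^ (ξ + 1)) +
            (1 / N) * x i * (k * ((∑ j, x j) / N + ζ) ^ ξ)) -
         ((τ + (k / (ξ + 1)) * ((∑ j, y j) / N + ζ) ^ (ξ + 1)) +
            (1 / N) * y i * (k * ((∑ j, y j) / N + ζ) ^ ξ))) * (x i - y i) := by
  have hn : (0:ℝ) < (N:ℝ) := by exact_mod_cast Nat.lt_of_lt_of_le Nat.zero_lt_one hN
  have hξ1 : (0:ℝ) < ξ + 1 := by linarith
  set n : ℝ := (N:ℝ) with hn_def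
  set Sx : ℝ := ∑ j, x j with hSx_def
  set Sy : ℝ := ∑ j, y j with hSy_def
  have hSy0 : 0 ≤ Sy := Finset.sum_nonneg fun i _ => (hy i).1
  set S : ℝ := ∑ i, (x i - y i)^2 with hS_def
  set w : ℝ := ∑ i, y i * (x i - y i) with hw_def
  set s : ℝ := Sx - Sy with hs_def
  have hS0 : 0 ≤ S := Finset.sum_nonneg fun i _ => sq_nonneg _
  have hxd : ∑ i, x i * (x i - y i) = w + S := by
    rw [hw_def, hS_def, ← Finset.sum_add_distrib]
    exact Finset.sum_congr rfl fun i _ => by ring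
  have hsd : ∑ i, (x i - y i) = s := by
    rw [Finset.sum_sub_distrib, hs_def, hSx_def, hSy_def]
  have hn0 : n ≠ 0 := hn.ne'
  -- rewrite the sum in closed form
  have main : ∑ i,
        (((τ + (k / (ξ + 1)) * (Sx / n + ζ) ^ (ξ + 1)) +
            (1 / n) * x i * (k * (Sx / n + ζ) ^ ξ)) -
         ((τ + (k / (ξ + 1)) * (Sy / n + ζ) ^ (ξ + 1)) +
            (1 / n) * y i * (k * (Sy / n + ζ) ^ ξ))) * (x i - y i)
      = (k/(ξ+1)) * ((Sx / n + ζ) ^ (ξ + 1) - (Sy / n + ζ) ^ (ξ + 1)) * s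
        + (k/n) * (Sx / n + ζ) ^ ξ * (w + S) - (k/n) * (Sy / n + ζ) ^ ξ * w := by
    calc ∑ i,
        (((τ + (k / (ξ + 1)) * (Sx / n + ζ) ^ (ξ + 1)) +
            (1 / n) * x i * (k * (Sx / n + ζ) ^ ξ)) -
         ((τ + (k / (ξ + 1)) * (Sy / n + ζ) ^ (ξ + 1)) +
            (1 / n) * y i * (k * (Sy / n + ζ) ^ ξ))) * (x i - y i)
        = ∑ i, ((k/(ξ+1)) * ((Sx / n + ζ) ^ (ξ + 1) - (Sy / n + ζ) ^ (ξ + 1)) * (x i - y i)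
          + (k/n) * (Sx / n + ζ) ^ ξ * (x i * (x i - y i))
          - (k/n) * (Sy / n + ζ) ^ ξ * (y i * (x i - y i))) :=
        Finset.sum_congr rfl fun i _ => by ring
      _ = (k/(ξ+1)) * ((Sx / n + ζ) ^ (ξ + 1) - (Sy / n + ζ) ^ (ξ + 1)) * (∑ i, (x i - y i))
          + (k/n) * (Sx / n + ζ) ^ ξ * (∑ i, x i * (x i - y i))
          - (k/n) * (Sy / n + ζ) ^ ξ * (∑ i, y i * (x i - y i)) := by
        rw [Finset.sum_sub_distrib, Finset.sum_add_distrib, ← Finset.mul_sum, ← Finset.mul_sum,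
          ← Finset.mul_sum]
      _ = _ := by rw [hxd, hsd, ← hw_def]
  rw [main]
  by_cases hsx : Sx = Sy
  · have hzero : (k/(ξ+1)) * ((Sx / n + ζ) ^ (ξ + 1) - (Sy / n + ζ) ^ (ξ + 1)) * s
        + (k/n) * (Sx / n + ζ) ^ ξ * (w + S) - (k/n) * (Sy / n + ζ) ^ ξ * w
        = (k/n) * (Sy / n + ζ) ^ ξ * S := by
      rw [hsx]; ring
    rw [hzero]
    exact mul_nonneg (mul_nonneg (div_nonneg hk hn.le)
      (Real.rpow_nonneg (add_nonneg (div_nonneg hSy0 hn.le) hζ) _)) hS0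
  · have hspos : 0 < s := by
      rw [hs_def]; exact sub_pos.2 (lt_of_le_of_ne hle fun h => hsx h.symm)
    clear_value s w S Sy Sx
    clear hxd main hsx hle
    clear_value n
    -- the interpolation function
    set g : ℝ → ℝ := fun t => (k/(ξ+1)) * ((Sy + t*s)/n + ζ)^(ξ+1) * s
        + (k/n) * ((Sy + t*s)/n + ζ)^ξ * (w + t*S) with hg_def
    clear_value g
    have e1 : (Sy + 1*s)/n + ζ = Sx / n + ζ := by rw [hs_def]; ring
    have e0 : (Sy + 0*s)/n + ζ = Sy / n + ζ := by ring
    have hg1 : g 1 = (k/(ξ+1)) * (Sx / n + ζ)^(ξ+1) * s + (k/n) * (Sx / n + ζ)^ξ * (w + S) := by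
      rw [hg_def]; simp only []; rw [e1]; norm_num
    have hg0 : g 0 = (k/(ξ+1)) * (Sy / n + ζ)^(ξ+1) * s + (k/n) * (Sy / n + ζ)^ξ * w := by
      rw [hg_def]; simp only []; rw [e0]; norm_num
    have hbase : Continuous fun t : ℝ => (Sy + t*s)/n + ζ := by continuity
    have hcontg : Continuous g := by
      rw [hg_def]
      apply Continuous.add
      · exact (continuous_const.mul
          (hbase.rpow_const fun t => Or.inr (by linarith : (0:ℝ) ≤ ξ + 1))).mul continuous_const
      · exact (continuous_const.mul (hbase.rpow_const fun t => Or.inr hξ)).mul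
          (continuous_const.add (continuous_id.mul continuous_const))
    -- derivative at interior points
    have hderiv : ∀ t ∈ Set.Ioo (0:ℝ) 1, HasDerivAt g
        ((k/n) * ((Sy + t*s)/n + ζ)^(ξ-1) *
          (((Sy + t*s)/n + ζ)*(s^2+S) + ξ*(s/n)*(w + t*S))) t := by
      intro t ht
      have hct : 0 < (Sy + t*s)/n + ζ := by
        have h1 : 0 < Sy + t*s := by nlinarith [ht.1, hspos, hSy0]
        exact add_pos_of_pos_of_nonneg (div_pos h1 hn) hζ
      have hcd : HasDerivAt (fun u : ℝ => (Sy + u*s)/n + ζ) (s/n) t := by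
        simpa using ((((hasDerivAt_id t).mul_const s).const_add Sy).div_const n).add_const ζ
      have hA : HasDerivAt (fun u : ℝ => ((Sy + u*s)/n + ζ)^(ξ+1))
          ((ξ+1) * ((Sy + t*s)/n + ζ)^(ξ+1-1) * (s/n)) t := by
        simpa only [Function.comp_def] using
          (Real.hasDerivAt_rpow_const (x := (Sy + t*s)/n + ζ) (p := ξ+1)
            (Or.inl hct.ne')).comp t hcd
      have hB : HasDerivAt (fun u : ℝ => ((Sy + u*s)/n + ζ)^ξ)
          (ξ * ((Sy + t*s)/n + ζ)^(ξ-1) * (s/n)) t := by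
        simpa only [Function.comp_def] using
          (Real.hasDerivAt_rpow_const (x := (Sy + t*s)/n + ζ) (p := ξ)
            (Or.inl hct.ne')).comp t hcd
      have hW : HasDerivAt (fun u : ℝ => w + u*S) S t := by
        simpa using ((hasDerivAt_id t).mul_const S).const_add w
      have hgd : HasDerivAt g
          ((k/(ξ+1)) * ((ξ+1) * ((Sy + t*s)/n + ζ)^(ξ+1-1) * (s/n)) * s
            + (((k/n) * (ξ * ((Sy + t*s)/n + ζ)^(ξ-1) * (s/n))) * (w + t*S)
              + ((k/n) * (((Sy + t*s)/n + ζ)^ξ)) * S)) t := by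
        rw [hg_def]
        exact ((hA.const_mul (k/(ξ+1))).mul_const s).add ((hB.const_mul (k/n)).mul hW)
      convert hgd using 1
      have eexp : ξ + 1 - 1 = ξ := by ring
      have hpow : ((Sy + t*s)/n + ζ)^ξ = ((Sy + t*s)/n + ζ)^(ξ-1) * ((Sy + t*s)/n + ζ) := by
        rw [← Real.rpow_add_one hct.ne' (ξ-1), sub_add_cancel]
      rw [eexp, hpow]
      field_simp
      ring
    -- nonnegativity of the derivative
    have hnonneg : ∀ t ∈ Set.Ioo (0:ℝ) 1,
        0 ≤ (k/n) * ((Sy + t*s)/n + ζ)^(ξ-1) *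
          (((Sy + t*s)/n + ζ)*(s^2+S) + ξ*(s/n)*(w + t*S)) := by
      intro t ht
      have hct : 0 < (Sy + t*s)/n + ζ := by
        have h1 : 0 < Sy + t*s := by nlinarith [ht.1, hspos, hSy0]
        exact add_pos_of_pos_of_nonneg (div_pos h1 hn) hζ
      apply mul_nonneg (mul_nonneg (div_nonneg hk hn.le) (Real.rpow_nonneg hct.le _))
      have hsS : (0:ℝ) ≤ s^2 + S := add_nonneg (sq_nonneg s) hS0
      rcases le_or_gt 0 (w + t*S) with hW0 | hW0
      · exact add_nonneg (mul_nonneg hct.le hsS)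
          (mul_nonneg (mul_nonneg hξ (div_nonneg hspos.le hn.le)) hW0)
      · -- Cauchy–Schwarz route
        set z : Fin N → ℝ := fun i => y i + t*(x i - y i) with hz_def
        have hz01 : ∀ i, 0 ≤ z i ∧ z i ≤ 1 := by
          intro i
          have hzi : z i = (1-t)*(y i) + t*(x i) := by rw [hz_def]; ring
          constructor
          · rw [hzi]
            exact add_nonneg (mul_nonneg (by linarith [ht.2]) (hy i).1)
              (mul_nonneg ht.1.le (hx i).1)
          · rw [hzi]
            nlinarith [(hy i).2, (hx i).2, ht.1, ht.2, (hy i).1, (hx i).1]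
        set m : ℝ := ∑ i, z i with hm_def
        set Z : ℝ := ∑ i, (z i)^2 with hZ_def
        have hm0 : 0 ≤ m := Finset.sum_nonneg fun i _ => (hz01 i).1
        have hZ0 : 0 ≤ Z := Finset.sum_nonneg fun i _ => sq_nonneg _
        have hZm : Z ≤ m := Finset.sum_le_sum fun i _ => by
          nlinarith [(hz01 i).1, (hz01 i).2]
        have hZm2 : Z ≤ m^2 := by
          calc Z ≤ ∑ i, z i * m := Finset.sum_le_sum fun i _ => by
                have hzm : z i ≤ m := Finset.single_le_sum (fun j _ => (hz01 j).1) (mem_univ i)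
                nlinarith [(hz01 i).1]
            _ = m^2 := by rw [← Finset.sum_mul, ← hm_def]; ring
        have hmval : m = Sy + t*s := by
          rw [hm_def, hz_def]
          rw [Finset.sum_add_distrib, ← Finset.mul_sum, hsd, ← hSy_def]
        have hWz : ∑ i, z i * (x i - y i) = w + t*S := by
          calc ∑ i, z i * (x i - y i)
              = ∑ i, (y i * (x i - y i) + t*((x i - y i)^2)) :=
                Finset.sum_congr rfl fun i _ => by rw [hz_def]; ring
            _ = w + t*S := by
                rw [Finset.sum_add_distrib, ← Finset.mul_sum, ← hw_def, ← hS_def]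
        have hcau : (w + t*S)^2 ≤ Z * S := by
          rw [← hWz, hZ_def, hS_def]
          exact Finset.sum_mul_sq_le_sq_mul_sq univ z (fun i => x i - y i)
        have hsk : ξ^2 * Z ≤ 4*(m + n*ζ)^2 :=
          scalar_key ξ (n*ζ) m Z hξ (mul_nonneg hn.le hζ) hm0 hZm hZm2 hZ0
            (by linarith) (by linarith)
        have h1 : (ξ * s * (-(w + t*S)))^2 ≤ ((m + n*ζ) * (s^2 + S))^2 := by
          calc (ξ * s * (-(w + t*S)))^2 = ξ^2 * (w+t*S)^2 * s^2 := by ring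
            _ ≤ ξ^2 * (Z*S) * s^2 :=
              mul_le_mul_of_nonneg_right
                (mul_le_mul_of_nonneg_left hcau (sq_nonneg ξ)) (sq_nonneg s)
            _ = (ξ^2*Z) * S * s^2 := by ring
            _ ≤ (4*(m+n*ζ)^2) * S * s^2 :=
              mul_le_mul_of_nonneg_right (mul_le_mul_of_nonneg_right hsk hS0) (sq_nonneg s)
            _ ≤ ((m+n*ζ)*(s^2+S))^2 := by
              nlinarith [mul_nonneg (sq_nonneg (m+n*ζ)) (sq_nonneg (s^2 - S))]
        have h2 : ξ * s * (-(w + t*S)) ≤ (m + n*ζ)*(s^2+S) :=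
          le_of_sq_le_sq'' _ _
            (mul_nonneg (add_nonneg hm0 (mul_nonneg hn.le hζ)) hsS) h1
        have hcm : ((Sy + t*s)/n + ζ) * n = m + n*ζ := by
          rw [hmval]; field_simp; try ring
        by_contra hcon
        push_neg at hcon
        have hmul : (((Sy + t*s)/n + ζ)*(s^2+S) + ξ*(s/n)*(w + t*S)) * n < 0 :=
          mul_neg_of_neg_of_pos hcon hn
        have hexp : (((Sy + t*s)/n + ζ)*(s^2+S) + ξ*(s/n)*(w + t*S)) * n
            = (((Sy + t*s)/n + ζ) * n)*(s^2+S) + ξ*s*(w + t*S) := by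
          field_simp
          try ring
        rw [hexp, hcm] at hmul
        nlinarith [h2]
    -- monotonicity
    have hmono : MonotoneOn g (Set.Icc (0:ℝ) 1) := by
      apply monotoneOn_of_deriv_nonneg (convex_Icc 0 1) hcontg.continuousOn
      · intro t ht
        rw [interior_Icc] at ht
        exact (hderiv t ht).differentiableAt.differentiableWithinAt
      · intro t ht
        rw [interior_Icc] at ht
        rw [(hderiv t ht).deriv]
        exact hnonneg t ht
    have hle01 : g 0 ≤ g 1 := hmono (Set.left_mem_Icc.2 zero_le_one)
      (Set.right_mem_Icc.2 zero_le_one) zero_le_one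
    rw [hg1, hg0] at hle01
    linarith [hle01]

/-- With `ℓ(σ) = τ + (k/(ξ+1))(σ+ζ)^{ξ+1}` and
`T(y)_i = ℓ(avg y) + (1/N) y_i ℓ'(avg y)` where `ℓ'(σ) = k(σ+ζ)^ξ`, if
`ζ ≥ max((ξ²−8)/(8N), (ξ−2)/(2N))` then `T` is monotone on `[0,1]^N`. -/
theorem stmt_8 (N : ℕ) (hN : 1 ≤ N) (τ k ξ ζ : ℝ)
    (hτ : 0 ≤ τ) (hk : 0 ≤ k) (hξ : 0 ≤ ξ) (hζ : 0 ≤ ζ)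
    (hcond : max ((ξ ^ 2 - 8) / (8 * N)) ((ξ - 2) / (2 * N)) ≤ ζ) :
    ∀ x y : Fin N → ℝ,
      (∀ i, x i ∈ Set.Icc (0 : ℝ) 1) → (∀ i, y i ∈ Set.Icc (0 : ℝ) 1) →
      0 ≤ ∑ i,
        (((τ + (k / (ξ + 1)) * ((∑ j, x j) / N + ζ) ^ (ξ + 1)) +
            (1 / N) * x i * (k * ((∑ j, x j) / N + ζ) ^ ξ)) -
         ((τ + (k / (ξ + 1)) * ((∑ j, y j) / N + ζ) ^ (ξ + 1)) +
            (1 / N) * y i * (k * ((∑ j, y j) / N + ζ) ^ ξ))) * (x i - y i) := by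
  intro x y hx hy
  have hn : (0:ℝ) < (N:ℝ) := by exact_mod_cast Nat.lt_of_lt_of_le Nat.zero_lt_one hN
  have hc1' : (ξ ^ 2 - 8) / (8 * N) ≤ ζ := le_trans (le_max_left _ _) hcond
  have hc2' : (ξ - 2) / (2 * N) ≤ ζ := le_trans (le_max_right _ _) hcond
  have c1 : ξ ^ 2 ≤ 8 * (N:ℝ) * ζ + 8 := by
    have := (div_le_iff₀ (by positivity : (0:ℝ) < 8 * N)).1 hc1'
    nlinarith
  have c2 : ξ ≤ 2 * (N:ℝ) * ζ + 2 := by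
    have := (div_le_iff₀ (by positivity : (0:ℝ) < 2 * N)).1 hc2'
    nlinarith
  rcases le_total (∑ j, y j) (∑ j, x j) with hle | hle
  · exact key N hN τ k ξ ζ hτ hk hξ hζ c1 c2 x y hx hy hle
  · have h := key N hN τ k ξ ζ hτ hk hξ hζ c1 c2 y x hy hx hle
    calc (0:ℝ) ≤ ∑ i,
        (((τ + (k / (ξ + 1)) * ((∑ j, y j) / N + ζ) ^ (ξ + 1)) +
            (1 / N) * y i * (k * ((∑ j, y j) / N + ζ) ^ ξ)) -
         ((τ + (k / (ξ + 1)) * ((∑ j, x j) / N + ζ) ^ (ξ + 1)) +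
            (1 / N) * x i * (k * ((∑ j, x j) / N + ζ) ^ ξ))) * (y i - x i) := h
      _ = _ := Finset.sum_congr rfl fun i _ => by ring
end

section
/- Let N ≥ 1 be an integer and τ, k, ζ ≥ 0 and 0 ≤ ξ ≤ 2 reals, and define ℓ(σ) = τ + (k/(ξ+1))(σ+ζ)^{ξ+1}. Then the operator T : ℝ^N → ℝ^N given by T(y)_i := ℓ(avg(y)) + (1/N)·y_i·ℓ'(avg(y)), where avg(y) := (1/N)Σ_j y_j and ℓ'(σ) = k(σ+ζ)^ξ, is monotone on [0,1]^N for every ζ ≥ 0. -/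
open Real Finset

private lemma aux_sq (ξ s v : ℝ) (hξ0 : 0 ≤ ξ) (hξ2 : ξ ≤ 2) :
    0 ≤ s ^ 2 + v ^ 2 + ξ * (s * v) := by
  rcases le_or_gt 0 (s * v) with h | h
  · nlinarith
  · have hp : 0 ≤ (2 - ξ) * (-(s * v)) := mul_nonneg (by linarith) (by linarith)
    nlinarith [sq_nonneg (s + v), hp]

private lemma phi_mono (n τ k ξ B d P Q s : ℝ)
    (hn : 0 < n) (hk : 0 ≤ k) (hξ0 : 0 ≤ ξ) (hξ2 : ξ ≤ 2)
    (hQ : 0 ≤ Q) (hB : 0 ≤ B) (hA : 0 ≤ B + d) (hd : d = s / n)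
    (hkey : ∀ t ∈ Set.Ioo (0:ℝ) 1,
      0 ≤ n * (B + t * d) * (s ^ 2 + Q) + ξ * s * (P + t * Q)) :
    s * (τ + k / (ξ + 1) * (B + 0 * d) ^ (ξ + 1))
        + 1 / n * (k * (B + 0 * d) ^ ξ * (P + 0 * Q)) ≤
    s * (τ + k / (ξ + 1) * (B + 1 * d) ^ (ξ + 1))
        + 1 / n * (k * (B + 1 * d) ^ ξ * (P + 1 * Q)) := by
  rcases eq_or_ne d 0 with h0 | h0
  · rw [h0]
    simp only [mul_zero, zero_mul, add_zero, one_mul]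
    have h1 : 0 ≤ k * B ^ ξ := mul_nonneg hk (Real.rpow_nonneg hB ξ)
    have h3 : 0 ≤ 1 / n * (k * B ^ ξ * Q) :=
      mul_nonneg (one_div_nonneg.mpr hn.le) (mul_nonneg h1 hQ)
    nlinarith [h3]
  · -- positivity in the interior
    have hpos : ∀ t ∈ Set.Ioo (0:ℝ) 1, 0 < B + t * d := by
      intro t ht
      obtain ⟨ht0, ht1⟩ := ht
      have hcase : 0 < B ∨ 0 < B + d := by
        rcases hB.lt_or_eq with h | h
        · exact Or.inl h
        · rcases hA.lt_or_eq with h' | h'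
          · exact Or.inr h'
          · exact absurd (by linarith : d = 0) h0
      rcases hcase with h | h
      · have e1 : 0 ≤ t * (B + d) := mul_nonneg ht0.le hA
        have e2 : 0 < (1 - t) * B := mul_pos (by linarith) h
        nlinarith
      · have e1 : 0 < t * (B + d) := mul_pos ht0 h
        have e2 : 0 ≤ (1 - t) * B := mul_nonneg (by linarith) hB
        nlinarith
    set φ : ℝ → ℝ := fun t =>
      s * (τ + k / (ξ + 1) * (B + t * d) ^ (ξ + 1))
        + 1 / n * (k * (B + t * d) ^ ξ * (P + t * Q)) with hφdef
    have hcont : Continuous φ := by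
      have h1 : Continuous fun t : ℝ => B + t * d := by continuity
      have h2 : Continuous fun t : ℝ => (B + t * d) ^ (ξ + 1) :=
        (Real.continuous_rpow_const (by linarith)).comp h1
      have h3 : Continuous fun t : ℝ => (B + t * d) ^ ξ :=
        (Real.continuous_rpow_const hξ0).comp h1
      have h4 : Continuous fun t : ℝ => P + t * Q := by continuity
      exact (continuous_const.mul (continuous_const.add (continuous_const.mul h2))).add
        (continuous_const.mul ((continuous_const.mul h3).mul h4))
    have hξ1 : ξ + 1 ≠ 0 := by linarith
    have hderiv : ∀ t ∈ Set.Ioo (0:ℝ) 1,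
        HasDerivAt φ (k * (B + t * d) ^ (ξ - 1) / n *
          ((B + t * d) * s ^ 2 + (B + t * d) * Q + ξ * s * (P + t * Q) / n)) t := by
      intro t ht
      have hct := hpos t ht
      have hC : HasDerivAt (fun t : ℝ => B + t * d) d t := by
        simpa using ((hasDerivAt_id t).mul_const d).const_add B
      have h1 : HasDerivAt (fun t : ℝ => (B + t * d) ^ (ξ + 1))
          (d * (ξ + 1) * (B + t * d) ^ ξ) t := by
        have := hC.rpow_const (p := ξ + 1) (Or.inl hct.ne')
        rwa [show ξ + 1 - 1 = ξ by ring] at this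
      have h2 : HasDerivAt (fun t : ℝ => (B + t * d) ^ ξ)
          (d * ξ * (B + t * d) ^ (ξ - 1)) t :=
        hC.rpow_const (p := ξ) (Or.inl hct.ne')
      have h3 : HasDerivAt (fun t : ℝ => P + t * Q) Q t := by
        simpa using ((hasDerivAt_id t).mul_const Q).const_add P
      have H : HasDerivAt φ
          (s * (k / (ξ + 1) * (d * (ξ + 1) * (B + t * d) ^ ξ)) +
            1 / n * ((k * (d * ξ * (B + t * d) ^ (ξ - 1))) * (P + t * Q)
              + (k * (B + t * d) ^ ξ) * Q)) t :=
        (((h1.const_mul (k / (ξ + 1))).const_add τ).const_mul s).add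
          (((h2.const_mul k).mul h3).const_mul (1 / n))
      convert H using 1
      have hce : (B + t * d) ^ ξ = (B + t * d) ^ (ξ - 1) * (B + t * d) := by
        conv_lhs => rw [show ξ = ξ - 1 + 1 by ring]
        rw [Real.rpow_add hct, Real.rpow_one]
      rw [hce, hd]
      field_simp
      ring
    have hmono : MonotoneOn φ (Set.Icc (0:ℝ) 1) := by
      apply monotoneOn_of_deriv_nonneg (convex_Icc 0 1) hcont.continuousOn
      · rw [interior_Icc]
        exact fun t ht => (hderiv t ht).differentiableAt.differentiableWithinAt
      · rw [interior_Icc]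
        intro t ht
        rw [(hderiv t ht).deriv]
        have hct := hpos t ht
        have hkt := hkey t ht
        have hbr : 0 ≤ (B + t * d) * s ^ 2 + (B + t * d) * Q + ξ * s * (P + t * Q) / n := by
          have e : (B + t * d) * s ^ 2 + (B + t * d) * Q + ξ * s * (P + t * Q) / n
              = (n * (B + t * d) * (s ^ 2 + Q) + ξ * s * (P + t * Q)) / n := by
            field_simp
          rw [e]
          exact div_nonneg hkt hn.le
        exact mul_nonneg (div_nonneg (mul_nonneg hk (Real.rpow_nonneg hct.le _)) hn.le) hbr
    exact hmono (Set.mem_Icc.mpr ⟨le_refl 0, zero_le_one⟩)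
      (Set.mem_Icc.mpr ⟨zero_le_one, le_refl 1⟩) zero_le_one

/-- With `ℓ(σ) = τ + (k/(ξ+1))(σ+ζ)^{ξ+1}` and `0 ≤ ξ ≤ 2`, the
operator `T(y)_i = ℓ(avg y) + (1/N) y_i ℓ'(avg y)`, `ℓ'(σ) = k(σ+ζ)^ξ`, is
monotone on `[0,1]^N` for every `ζ ≥ 0`. -/
theorem stmt_9 (N : ℕ) (hN : 1 ≤ N) (τ k ξ ζ : ℝ)
    (hτ : 0 ≤ τ) (hk : 0 ≤ k) (hξ0 : 0 ≤ ξ) (hξ2 : ξ ≤ 2) (hζ : 0 ≤ ζ) :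
    ∀ x y : Fin N → ℝ,
      (∀ i, x i ∈ Set.Icc (0 : ℝ) 1) → (∀ i, y i ∈ Set.Icc (0 : ℝ) 1) →
      0 ≤ ∑ i,
        (((τ + (k / (ξ + 1)) * ((∑ j, x j) / N + ζ) ^ (ξ + 1)) +
            (1 / N) * x i * (k * ((∑ j, x j) / N + ζ) ^ ξ)) -
         ((τ + (k / (ξ + 1)) * ((∑ j, y j) / N + ζ) ^ (ξ + 1)) +
            (1 / N) * y i * (k * ((∑ j, y j) / N + ζ) ^ ξ))) * (x i - y i) := by
  intro x y hx hy
  have hn : (0:ℝ) < (N:ℝ) := by exact_mod_cast Nat.pos_of_ne_zero (by omega)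
  set Sx := ∑ j, x j with hSxdef
  set Sy := ∑ j, y j with hSydef
  set A := Sx / (N:ℝ) + ζ with hAdef
  set B := Sy / (N:ℝ) + ζ with hBdef
  set s := Sx - Sy with hsdef
  set d := s / (N:ℝ) with hddef
  set P := ∑ i, y i * (x i - y i) with hPdef
  set Q := ∑ i, (x i - y i) ^ 2 with hQdef
  have hQ : 0 ≤ Q := Finset.sum_nonneg fun i _ => sq_nonneg _
  have hSx : 0 ≤ Sx := Finset.sum_nonneg fun i _ => (hx i).1
  have hSy : 0 ≤ Sy := Finset.sum_nonneg fun i _ => (hy i).1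
  have hB : 0 ≤ B := by rw [hBdef]; positivity
  have hBdA : B + 1 * d = A := by rw [hAdef, hBdef, hddef, hsdef]; field_simp; ring
  have hA : 0 ≤ B + d := by
    have : B + d = A := by rw [← hBdA]; ring
    rw [this, hAdef]; positivity
  -- the key inequality along the segment
  have hkey : ∀ t ∈ Set.Ioo (0:ℝ) 1,
      0 ≤ (N:ℝ) * (B + t * d) * (s ^ 2 + Q) + ξ * s * (P + t * Q) := by
    intro t ht
    obtain ⟨ht0, ht1⟩ := ht
    set z : Fin N → ℝ := fun i => y i + t * (x i - y i) with hzdef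
    have hz0 : ∀ i, 0 ≤ z i := by
      intro i
      have h1 : 0 ≤ (1 - t) * y i := mul_nonneg (by linarith) (hy i).1
      have h2 : 0 ≤ t * x i := mul_nonneg ht0.le (hx i).1
      simp only [hzdef]; nlinarith
    have hz1 : ∀ i, z i ≤ 1 := by
      intro i
      have h1 : (1 - t) * y i ≤ (1 - t) * 1 := by
        apply mul_le_mul_of_nonneg_left (hy i).2 (by linarith)
      have h2 : t * x i ≤ t * 1 := mul_le_mul_of_nonneg_left (hx i).2 ht0.le
      simp only [hzdef]; nlinarith
    have hsz : ∑ i, z i = Sy + t * s := by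
      simp only [hzdef]
      rw [Finset.sum_add_distrib, ← Finset.mul_sum, Finset.sum_sub_distrib]
    have hPz : P + t * Q = ∑ i, z i * (x i - y i) := by
      have e1 : ∑ i, z i * (x i - y i)
          = ∑ i, (y i * (x i - y i) + t * (x i - y i) ^ 2) :=
        Finset.sum_congr rfl fun i _ => by simp only [hzdef]; ring
      rw [e1, Finset.sum_add_distrib, ← Finset.mul_sum, ← hPdef, ← hQdef]
    have hnc : ∑ i, z i ≤ (N:ℝ) * (B + t * d) := by
      have e : (N:ℝ) * (B + t * d) = Sy + t * s + (N:ℝ) * ζ := by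
        rw [hBdef, hddef]; field_simp; try ring
      rw [e, hsz]
      nlinarith [mul_nonneg hn.le hζ]
    have hterm : ∀ i ∈ Finset.univ (α := Fin N),
        0 ≤ z i * (s ^ 2 + Q + ξ * (s * (x i - y i))) := by
      intro i _
      apply mul_nonneg (hz0 i)
      have h1 : (x i - y i) ^ 2 ≤ Q := by
        rw [hQdef]
        exact Finset.single_le_sum (fun j _ => sq_nonneg ((x j - y j))) (Finset.mem_univ i)
      have h2 := aux_sq ξ s (x i - y i) hξ0 hξ2
      linarith
    have hsum2 : ∑ i, z i * (s ^ 2 + Q + ξ * (s * (x i - y i)))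
        = (∑ i, z i) * (s ^ 2 + Q) + ξ * s * (∑ i, z i * (x i - y i)) := by
      rw [Finset.sum_mul, Finset.mul_sum]
      rw [← Finset.sum_add_distrib]
      exact Finset.sum_congr rfl fun i _ => by ring
    have h0 : 0 ≤ (∑ i, z i) * (s ^ 2 + Q) + ξ * s * (∑ i, z i * (x i - y i)) := by
      rw [← hsum2]; exact Finset.sum_nonneg hterm
    have h1 : (∑ i, z i) * (s ^ 2 + Q) ≤ (N:ℝ) * (B + t * d) * (s ^ 2 + Q) :=
      mul_le_mul_of_nonneg_right hnc (by positivity)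
    rw [hPz]
    linarith
  have hφ := phi_mono (N:ℝ) τ k ξ B d P Q s hn hk hξ0 hξ2 hQ hB hA hddef hkey
  have hEq : ∑ i,
        (((τ + (k / (ξ + 1)) * A ^ (ξ + 1)) + (1 / (N:ℝ)) * x i * (k * A ^ ξ)) -
         ((τ + (k / (ξ + 1)) * B ^ (ξ + 1)) + (1 / (N:ℝ)) * y i * (k * B ^ ξ))) * (x i - y i)
      = (s * (τ + k / (ξ + 1) * (B + 1 * d) ^ (ξ + 1))
            + 1 / (N:ℝ) * (k * (B + 1 * d) ^ ξ * (P + 1 * Q)))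
        - (s * (τ + k / (ξ + 1) * (B + 0 * d) ^ (ξ + 1))
            + 1 / (N:ℝ) * (k * (B + 0 * d) ^ ξ * (P + 0 * Q))) := by
    rw [hBdA, show B + 0 * d = B by ring]
    have e1 : ∀ i, (((τ + (k / (ξ + 1)) * A ^ (ξ + 1)) + (1 / (N:ℝ)) * x i * (k * A ^ ξ)) -
         ((τ + (k / (ξ + 1)) * B ^ (ξ + 1)) + (1 / (N:ℝ)) * y i * (k * B ^ ξ))) * (x i - y i)
        = (k / (ξ + 1) * A ^ (ξ + 1) - k / (ξ + 1) * B ^ (ξ + 1)) * (x i - y i)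
          + (1 / (N:ℝ) * (k * A ^ ξ)) * (y i * (x i - y i) + (x i - y i) ^ 2)
          - (1 / (N:ℝ) * (k * B ^ ξ)) * (y i * (x i - y i)) := fun i => by ring
    rw [Finset.sum_congr rfl fun i _ => e1 i]
    rw [Finset.sum_sub_distrib, Finset.sum_add_distrib, ← Finset.mul_sum, ← Finset.mul_sum,
      ← Finset.mul_sum, Finset.sum_add_distrib, Finset.sum_sub_distrib]
    rw [← hSxdef, ← hSydef, ← hPdef, ← hQdef, ← hsdef]
    ring
  rw [hEq]
  exact sub_nonneg.mpr hφ
end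

section
/- Let N ≥ 1 be an integer and k, ξ, ζ ≥ 0 reals with ζ ≥ max((ξ² − 8)/(8N), (ξ − 2)/(2N)). Then for every y ∈ [0,1]^N with avg(y) + ζ > 0, writing σ := avg(y) = (1/N)Σ_j y_j, the symmetric matrix S(y) := (2k/N)(σ+ζ)^ξ I_N + (k/N)(σ+ζ)^{ξ−1}·(2(σ+ζ)𝟏𝟏ᵀ + (ξ/N)(y𝟏ᵀ + 𝟏yᵀ)) is positive semidefinite. -/
/-!
Write `S(y) = a I + b (2s 𝟏𝟏ᵀ + c (y𝟏ᵀ + 𝟏yᵀ))` with `s = σ + ζ`, `b = (k/N) s^(ξ-1)`,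
`c = ξ/N` and `a = 2sb`. Its quadratic form at `x` is
`2b (s‖x‖² + s t² + c t ⟪y, x⟫)` with `t = ∑ xᵢ`. By AM–GM `s‖x‖² + s t² ≥ 2s |t| ‖x‖`,
and by Cauchy–Schwarz `|c t ⟪y, x⟫| ≤ c ‖y‖ |t| ‖x‖`, so it suffices that `c² ‖y‖² ≤ 4s²`,
i.e. `ξ² ‖y‖² ≤ 4 (∑ yᵢ + Nζ)²`. For `y ∈ [0,1]^N` one has `‖y‖² ≤ min(T, T²)` with
`T = ∑ yᵢ`, and the hypothesis on `ζ` is what makes `ξ² min(T, T²) ≤ 4 (T + Nζ)²`.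
-/

open Matrix Finset

lemma sq_mul_le_four_mul_add_sq {ξ M T P : ℝ} (hξ : 0 ≤ ξ) (hM : 0 ≤ M) (hT : 0 ≤ T)
    (hPT : P ≤ T) (hPT2 : P ≤ T ^ 2) (h8 : ξ ^ 2 ≤ 8 * M + 8) (h2 : ξ ≤ 2 * M + 2) :
    ξ ^ 2 * P ≤ 4 * (T + M) ^ 2 := by
  rcases le_total T 1 with hT1 | hT1
  · have hξT : ξ * T ≤ 2 * (T + M) := by nlinarith
    calc ξ ^ 2 * P ≤ ξ ^ 2 * T ^ 2 := by gcongr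
      _ = (ξ * T) ^ 2 := by ring
      _ ≤ (2 * (T + M)) ^ 2 := by gcongr
      _ = 4 * (T + M) ^ 2 := by ring
  have hP : ξ ^ 2 * P ≤ ξ ^ 2 * T := by gcongr
  rcases le_total M 1 with hM1 | hM1
  · -- `(T + M)² - (M + 1)² T = (T - 1)(T - M²)`
    have hM2 : M ^ 2 ≤ T := by nlinarith
    calc ξ ^ 2 * P ≤ ξ ^ 2 * T := hP
      _ ≤ (2 * M + 2) ^ 2 * T := by gcongr
      _ ≤ 4 * (T + M) ^ 2 := by
        nlinarith [mul_nonneg (sub_nonneg.2 hT1) (sub_nonneg.2 hM2)]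
  · -- `(T + M)² - 2 (M + 1) T = (T - 1)² + M² - 1`
    calc ξ ^ 2 * P ≤ ξ ^ 2 * T := hP
      _ ≤ (8 * M + 8) * T := by gcongr
      _ ≤ 4 * (T + M) ^ 2 := by nlinarith [sq_nonneg (T - 1)]

section SymmetrizedJacobian

variable {ι : Type*} [DecidableEq ι]

def symmetrizedJacobian (a b s c : ℝ) (y : ι → ℝ) : Matrix ι ι ℝ :=
  of fun i j => a * (if i = j then 1 else 0) + b * (2 * s + c * (y i + y j))

lemma symmetrizedJacobian_isHermitian (a b s c : ℝ) (y : ι → ℝ) :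
    (symmetrizedJacobian a b s c y).IsHermitian := by
  ext i j
  simp only [symmetrizedJacobian, conjTranspose_apply, of_apply, star_trivial, eq_comm (a := j)]
  ring

variable [Fintype ι]

lemma star_dotProduct_symmetrizedJacobian_mulVec (a b s c : ℝ) (y x : ι → ℝ) :
    star x ⬝ᵥ (symmetrizedJacobian a b s c y *ᵥ x)
      = a * ∑ i, x i ^ 2 + 2 * b * s * (∑ i, x i) ^ 2
        + 2 * b * c * (∑ i, x i) * ∑ i, y i * x i := by
  have entry : ∀ i j,
      x i * ((a * (if i = j then 1 else 0) + b * (2 * s + c * (y i + y j))) * x j)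
        = a * (if i = j then x i * x j else 0) + 2 * b * s * (x i * x j)
          + b * c * (x j * (y i * x i)) + b * c * (x i * (y j * x j)) := by
    intro i j
    split_ifs <;> ring
  simp only [symmetrizedJacobian, dotProduct, mulVec, star_trivial, of_apply, mul_sum, entry,
    sum_add_distrib]
  simp only [← mul_sum, ← sum_mul, sum_ite_eq, mem_univ, if_true, ← sq]
  ring

theorem symmetrizedJacobian_posSemidef {a b s c : ℝ} {y : ι → ℝ} (hb : 0 ≤ b) (hs : 0 ≤ s)
    (ha : 2 * s * b ≤ a) (hc : c ^ 2 * ∑ i, y i ^ 2 ≤ 4 * s ^ 2) :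
    (symmetrizedJacobian a b s c y).PosSemidef := by
  refine posSemidef_iff_dotProduct_mulVec.2
    ⟨symmetrizedJacobian_isHermitian a b s c y, fun x => ?_⟩
  rw [star_dotProduct_symmetrizedJacobian_mulVec]
  set X := ∑ i, x i ^ 2
  set t := ∑ i, x i
  set u := ∑ i, y i * x i
  have hX : 0 ≤ X := by positivity
  have hCS : u ^ 2 ≤ (∑ i, y i ^ 2) * X := sum_mul_sq_le_sq_mul_sq _ _ _
  have hcross : (c * t * u) ^ 2 ≤ (s * X + s * t ^ 2) ^ 2 :=
    calc (c * t * u) ^ 2 = c ^ 2 * u ^ 2 * t ^ 2 := by ring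
      _ ≤ c ^ 2 * ((∑ i, y i ^ 2) * X) * t ^ 2 := by gcongr
      _ = c ^ 2 * (∑ i, y i ^ 2) * (X * t ^ 2) := by ring
      _ ≤ 4 * s ^ 2 * (X * t ^ 2) := by gcongr
      _ ≤ (s * X + s * t ^ 2) ^ 2 := by nlinarith [sq_nonneg (s * X - s * t ^ 2)]
  have hbracket : 0 ≤ s * X + s * t ^ 2 + c * t * u := by
    linarith [(abs_le_of_sq_le_sq' hcross (by positivity)).1]
  calc 0 ≤ (a - 2 * s * b) * X + 2 * b * (s * X + s * t ^ 2 + c * t * u) := by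
        have : 0 ≤ a - 2 * s * b := by linarith
        positivity
    _ = a * X + 2 * b * s * t ^ 2 + 2 * b * c * t * u := by ring

end SymmetrizedJacobian

/-- Under the condition `ζ ≥ max((ξ²−8)/(8N), (ξ−2)/(2N))`, the
symmetrized game Jacobian `S(y) = (2k/N)(σ+ζ)^ξ I + (k/N)(σ+ζ)^{ξ−1}
(2(σ+ζ)𝟏𝟏ᵀ + (ξ/N)(y𝟏ᵀ + 𝟏yᵀ))` is positive semidefinite on `[0,1]^N`
whenever `avg(y) + ζ > 0`. -/
theorem stmt_10 (N : ℕ) (hN : 1 ≤ N) (k ξ ζ : ℝ)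
    (hk : 0 ≤ k) (hξ : 0 ≤ ξ) (hζ : 0 ≤ ζ)
    (hcond : max ((ξ ^ 2 - 8) / (8 * N)) ((ξ - 2) / (2 * N)) ≤ ζ) :
    ∀ y : Fin N → ℝ, (∀ i, y i ∈ Set.Icc (0 : ℝ) 1) →
      0 < (∑ j, y j) / N + ζ →
      (Matrix.of fun i j : Fin N =>
        (2 * k / N) * ((∑ l, y l) / N + ζ) ^ ξ * (if i = j then (1 : ℝ) else 0) +
        (k / N) * ((∑ l, y l) / N + ζ) ^ (ξ - 1) *
          (2 * ((∑ l, y l) / N + ζ) + (ξ / N) * (y i + y j))).PosSemidef := by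
  intro y hy hs
  have hN0 : (0 : ℝ) < N := by exact_mod_cast hN
  set s := (∑ l, y l) / N + ζ
  obtain ⟨h8, h2⟩ := max_le_iff.1 hcond
  rw [div_le_iff₀ (by positivity)] at h8 h2
  have hsq : ∑ i, y i ^ 2 ≤ ∑ i, y i :=
    sum_le_sum fun i _ => pow_le_of_le_one (hy i).1 (hy i).2 two_ne_zero
  have hbound : ξ ^ 2 * ∑ i, y i ^ 2 ≤ 4 * (∑ i, y i + N * ζ) ^ 2 :=
    sq_mul_le_four_mul_add_sq hξ (by positivity) (sum_nonneg fun i _ => (hy i).1) hsq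
      (sum_sq_le_sq_sum_of_nonneg fun i _ => (hy i).1) (by linarith) (by linarith)
  refine symmetrizedJacobian_posSemidef (by positivity) hs.le ?_ ?_
  · rw [Real.rpow_sub_one hs.ne']
    field_simp
    rfl
  · calc (ξ / N) ^ 2 * ∑ i, y i ^ 2 = ξ ^ 2 * (∑ i, y i ^ 2) / N ^ 2 := by ring
      _ ≤ 4 * (∑ i, y i + N * ζ) ^ 2 / N ^ 2 := by gcongr
      _ = 4 * s ^ 2 := by simp only [s]; field_simp
end

section
/- Let N ≥ 1 be an integer and k, ξ, ζ ≥ 0 reals with ξ ≥ 1 or ζ > 0, and define ℓ(σ) = τ + (k/(ξ+1))(σ+ζ)^{ξ+1} for some τ ≥ 0. Then the operator T : [0,1]^N → ℝ^N given by T(y)_i := ℓ(avg(y)) + (1/N)·y_i·ℓ'(avg(y)), with avg(y) := (1/N)Σ_j y_j and ℓ'(σ) = k(σ+ζ)^ξ, is Lipschitz continuous on [0,1]^N with Lipschitz constant L := (2k/N)·((1+N)(1+ζ)^ξ + ξ(1+ζ)^{ξ−1}), i.e., ‖T(x) − T(y)‖ ≤ L‖x − y‖ for all x, y ∈ [0,1]^N.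 -/
/-!
Write `s, t` for the averages of `x, y`, with `t ≤ s`, and `f σ = (σ + ζ) ^ ξ`, so `ℓ' = k f`.
Coordinatewise
`T x - T y = (ℓ s - ℓ t) • 𝟙 + (k / N) f(s) • (x - y) + (k / N) (f s - f t) • y`.
Cauchy–Schwarz gives `√N (s - t) ≤ ‖x - y‖`, and the mean value theorem bounds
`ℓ s - ℓ t` by `k f(1) (s - t)` and, when `ξ ≥ 1`, `f s - f t` by
`ξ (1 + ζ) ^ (ξ - 1) (s - t)`, with `‖y‖ ≤ √N`. When `ξ < 1`, `f'` blows up near `-ζ`;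
concavity gives `f s - f t ≤ ξ (t + ζ) ^ (ξ - 1) (s - t)` instead, and the factor
`(t + ζ) ^ (ξ - 1)` is absorbed by `‖y‖ ≤ ∑ y = N t`.
-/

open Real Finset

section RpowDifferences

lemma rpow_sub_rpow_le_mul_sub {p a b M : ℝ} (hp : 0 ≤ p) (ha : 0 ≤ a) (hab : a ≤ b)
    (hM : ∀ u ∈ Set.Ioo a b, p * u ^ (p - 1) ≤ M) : b ^ p - a ^ p ≤ M * (b - a) := by
  rcases hab.eq_or_lt with rfl | hlt
  · simp
  obtain ⟨c, hc, hslope⟩ := exists_hasDerivAt_eq_slope (fun u : ℝ => u ^ p)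
    (fun u => p * u ^ (p - 1)) hlt
    (fun u _ => (continuousAt_rpow_const u p (Or.inr hp)).continuousWithinAt)
    (fun u hu => hasDerivAt_rpow_const (Or.inl (ha.trans_lt hu.1).ne'))
  rw [eq_div_iff (sub_pos.2 hlt).ne'] at hslope
  rw [← hslope]
  exact mul_le_mul_of_nonneg_right (hM c hc) (sub_pos.2 hlt).le

lemma rpow_sub_rpow_le_of_one_le {p a b c : ℝ} (hp : 1 ≤ p) (ha : 0 ≤ a) (hab : a ≤ b)
    (hbc : b ≤ c) : b ^ p - a ^ p ≤ p * c ^ (p - 1) * (b - a) :=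
  rpow_sub_rpow_le_mul_sub (by linarith) ha hab fun u hu =>
    mul_le_mul_of_nonneg_left
      (rpow_le_rpow (ha.trans hu.1.le) (hu.2.le.trans hbc) (by linarith)) (by linarith)

lemma rpow_sub_rpow_le_of_le_one {p a b : ℝ} (hp₀ : 0 ≤ p) (hp₁ : p ≤ 1) (ha : 0 < a)
    (hab : a ≤ b) : b ^ p - a ^ p ≤ p * a ^ (p - 1) * (b - a) :=
  rpow_sub_rpow_le_mul_sub hp₀ ha.le hab fun u hu =>
    mul_le_mul_of_nonneg_left (rpow_le_rpow_of_nonpos ha hu.1.le (by linarith)) hp₀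

lemma mul_rpow_sub_one_le_rpow {p a b : ℝ} (hb : 0 ≤ b) (hab : a ≤ b) :
    a * b ^ (p - 1) ≤ b ^ p := by
  rcases hb.eq_or_lt with rfl | hb
  · exact (mul_nonpos_of_nonpos_of_nonneg hab (rpow_nonneg le_rfl _)).trans (rpow_nonneg le_rfl p)
  calc a * b ^ (p - 1) ≤ b * b ^ (p - 1) := by gcongr
    _ = b ^ p := by rw [rpow_sub_one hb.ne', mul_div_cancel₀ _ hb.ne']

/-- `ν` plays the role of `‖y‖`. -/
lemma rpow_sub_rpow_mul_le {n ξ ζ s t ν : ℝ} (hn : 1 ≤ n) (hξ : 0 ≤ ξ) (hζ : 0 ≤ ζ)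
    (hreg : 1 ≤ ξ ∨ 0 < ζ) (ht : 0 ≤ t) (hts : t ≤ s) (hs : s ≤ 1) (hν : 0 ≤ ν)
    (hν_sqrt : ν ≤ √n) (hν_mul : ν ≤ n * t) :
    ((s + ζ) ^ ξ - (t + ζ) ^ ξ) * ν ≤
      (n * (1 + ζ) ^ ξ + ξ * (1 + ζ) ^ (ξ - 1)) * (√n * (s - t)) := by
  have hδ : 0 ≤ √n * (s - t) := mul_nonneg (sqrt_nonneg n) (by linarith)
  have hP : 0 ≤ n * (1 + ζ) ^ ξ := by positivity
  rcases le_or_gt 1 ξ with hξ₁ | hξ₁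
  · have hdiff := rpow_sub_rpow_le_of_one_le hξ₁ (by linarith) (by linarith : t + ζ ≤ s + ζ)
      (by linarith : s + ζ ≤ 1 + ζ)
    rw [add_sub_add_right_eq_sub] at hdiff
    calc ((s + ζ) ^ ξ - (t + ζ) ^ ξ) * ν ≤ ξ * (1 + ζ) ^ (ξ - 1) * (s - t) * √n := by
          gcongr
      _ ≤ _ := by nlinarith
  · have hζ₀ : 0 < ζ := hreg.resolve_left (not_le.2 hξ₁)
    have hdiff := rpow_sub_rpow_le_of_le_one hξ hξ₁.le (by linarith : 0 < t + ζ)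
      (by linarith : t + ζ ≤ s + ζ)
    rw [add_sub_add_right_eq_sub] at hdiff
    have hsqrt : 1 ≤ √n := one_le_sqrt.2 hn
    calc ((s + ζ) ^ ξ - (t + ζ) ^ ξ) * ν ≤ ξ * (t + ζ) ^ (ξ - 1) * (s - t) * (n * t) := by
          gcongr
      _ = ξ * n * (s - t) * (t * (t + ζ) ^ (ξ - 1)) := by ring
      _ ≤ 1 * n * (s - t) * (1 + ζ) ^ ξ := by
          gcongr ?_ * _ * _ * ?_
          exact (mul_rpow_sub_one_le_rpow (by linarith) (by linarith)).trans
            (rpow_le_rpow (by linarith) (by linarith) hξ)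
      _ ≤ _ := by
          nlinarith [mul_nonneg hξ (rpow_nonneg (by linarith : (0 : ℝ) ≤ 1 + ζ) (ξ - 1)),
            mul_nonneg hP (mul_nonneg (sub_nonneg.2 hsqrt) (sub_nonneg.2 hts))]

end RpowDifferences

section EuclideanBounds

variable {ι : Type*} [Fintype ι]

lemma sqrt_sum_sq_sub_eq_dist (u v : ι → ℝ) :
    √(∑ i, (u i - v i) ^ 2) = dist (WithLp.toLp 2 u) (WithLp.toLp 2 v) := by
  simp [EuclideanSpace.dist_eq, Real.dist_eq, sq_abs]

lemma abs_sum_le_sqrt_card_mul_norm (v : EuclideanSpace ℝ ι) :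
    |∑ i, v i| ≤ √(Fintype.card ι) * ‖v‖ := by
  rw [EuclideanSpace.norm_eq, ← sqrt_mul (Nat.cast_nonneg _), ← sqrt_sq_eq_abs]
  gcongr
  simpa [sq_abs] using sq_sum_le_card_mul_sum_sq (s := univ) (f := fun i => v i)

lemma norm_le_sum_of_nonneg (v : EuclideanSpace ℝ ι) (hv : ∀ i, 0 ≤ v i) :
    ‖v‖ ≤ ∑ i, v i := by
  rw [EuclideanSpace.norm_eq, sqrt_le_left (sum_nonneg fun i _ => hv i)]
  simpa [sq_abs] using sum_sq_le_sq_sum_of_nonneg (s := univ) fun i _ => hv i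

lemma norm_le_sqrt_card_of_norm_le_one (v : EuclideanSpace ℝ ι) (hv : ∀ i, ‖v i‖ ≤ 1) :
    ‖v‖ ≤ √(Fintype.card ι) := by
  rw [EuclideanSpace.norm_eq]
  gcongr
  calc ∑ i, ‖v i‖ ^ 2 ≤ ∑ _i : ι, (1 : ℝ) :=
        sum_le_sum fun i _ => pow_le_one₀ (norm_nonneg _) (hv i)
    _ = Fintype.card ι := by simp

lemma norm_toLp_const_one :
    ‖(WithLp.toLp 2 fun _ => 1 : EuclideanSpace ℝ ι)‖ = √(Fintype.card ι) := by
  simp [EuclideanSpace.norm_eq]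

end EuclideanBounds

noncomputable section

namespace RoutingGame

variable {N : ℕ}

def avg (y : Fin N → ℝ) : ℝ := (∑ j, y j) / N

def latency (τ k ξ ζ σ : ℝ) : ℝ := τ + k / (ξ + 1) * (σ + ζ) ^ (ξ + 1)

def latencyDeriv (k ξ ζ σ : ℝ) : ℝ := k * (σ + ζ) ^ ξ

def gameMap (τ k ξ ζ : ℝ) (y : Fin N → ℝ) : Fin N → ℝ :=
  fun i => latency τ k ξ ζ (avg y) + 1 / N * y i * latencyDeriv k ξ ζ (avg y)

lemma avg_mem_Icc {y : Fin N → ℝ} (hy : ∀ i, y i ∈ Set.Icc (0 : ℝ) 1) :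
    avg y ∈ Set.Icc (0 : ℝ) 1 := by
  have hsum : ∑ j, y j ≤ N := by
    simpa using sum_le_sum fun i (_ : i ∈ univ) => (hy i).2
  exact ⟨div_nonneg (sum_nonneg fun i _ => (hy i).1) N.cast_nonneg,
    div_le_one_of_le₀ hsum N.cast_nonneg⟩

lemma sqrt_mul_avg_sub_avg_le_dist (x y : Fin N → ℝ) :
    √N * (avg x - avg y) ≤ dist (WithLp.toLp 2 x) (WithLp.toLp 2 y) := by
  rcases N.eq_zero_or_pos with rfl | hN
  · simp
  have hsqrt : 0 < √N := sqrt_pos.2 (Nat.cast_pos.2 hN)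
  have h := abs_sum_le_sqrt_card_mul_norm (WithLp.toLp 2 x - WithLp.toLp 2 y)
  simp only [PiLp.sub_apply, sum_sub_distrib, Fintype.card_fin, ← dist_eq_norm] at h
  calc √N * (avg x - avg y) = (∑ j, x j - ∑ j, y j) / √N := by
        rw [avg, avg, ← sub_div, eq_div_iff hsqrt.ne', mul_right_comm,
          mul_self_sqrt N.cast_nonneg, mul_div_cancel₀ _ (Nat.cast_pos.2 hN).ne']
    _ ≤ dist (WithLp.toLp 2 x) (WithLp.toLp 2 y) := by
        rw [div_le_iff₀' hsqrt]
        exact (le_abs_self _).trans h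

lemma norm_toLp_le_mul_avg (hN : N ≠ 0) {y : Fin N → ℝ} (hy : ∀ i, 0 ≤ y i) :
    ‖WithLp.toLp 2 y‖ ≤ N * avg y := by
  rw [avg, mul_div_cancel₀ _ (Nat.cast_ne_zero.2 hN)]
  exact norm_le_sum_of_nonneg _ hy

lemma toLp_gameMap_sub (τ k ξ ζ : ℝ) (x y : Fin N → ℝ) :
    WithLp.toLp 2 (gameMap τ k ξ ζ x) - WithLp.toLp 2 (gameMap τ k ξ ζ y) =
      (latency τ k ξ ζ (avg x) - latency τ k ξ ζ (avg y)) • WithLp.toLp 2 (fun _ => 1) +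
      (latencyDeriv k ξ ζ (avg x) / N) • (WithLp.toLp 2 x - WithLp.toLp 2 y) +
      ((latencyDeriv k ξ ζ (avg x) - latencyDeriv k ξ ζ (avg y)) / N) • WithLp.toLp 2 y := by
  ext i
  simp only [gameMap, PiLp.add_apply, PiLp.sub_apply, PiLp.smul_apply, smul_eq_mul]
  ring

section Estimates

variable {τ k ξ ζ s t : ℝ}

lemma latency_sub_latency_le (hk : 0 ≤ k) (hξ : 0 ≤ ξ) (ht : 0 ≤ t + ζ) (hts : t ≤ s)
    (hs : s ≤ 1) : latency τ k ξ ζ s - latency τ k ξ ζ t ≤ k * (1 + ζ) ^ ξ * (s - t) := by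
  have hdiff := rpow_sub_rpow_le_of_one_le (by linarith : 1 ≤ ξ + 1) ht
    (by linarith : t + ζ ≤ s + ζ) (by linarith : s + ζ ≤ 1 + ζ)
  rw [add_sub_cancel_right, add_sub_add_right_eq_sub] at hdiff
  calc latency τ k ξ ζ s - latency τ k ξ ζ t
      = k / (ξ + 1) * ((s + ζ) ^ (ξ + 1) - (t + ζ) ^ (ξ + 1)) := by unfold latency; ring
    _ ≤ k / (ξ + 1) * ((ξ + 1) * (1 + ζ) ^ ξ * (s - t)) := by gcongr
    _ = k * (1 + ζ) ^ ξ * (s - t) := by field_simp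

lemma latency_le_latency (hk : 0 ≤ k) (hξ : 0 ≤ ξ) (ht : 0 ≤ t + ζ) (hts : t ≤ s) :
    latency τ k ξ ζ t ≤ latency τ k ξ ζ s := by
  unfold latency
  gcongr

lemma latencyDeriv_le_latencyDeriv (hk : 0 ≤ k) (hξ : 0 ≤ ξ) (ht : 0 ≤ t + ζ) (hts : t ≤ s) :
    latencyDeriv k ξ ζ t ≤ latencyDeriv k ξ ζ s := by
  unfold latencyDeriv
  gcongr

end Estimates

lemma norm_toLp_gameMap_sub_le {τ k ξ ζ : ℝ} (hk : 0 ≤ k) (hξ : 0 ≤ ξ) (hζ : 0 ≤ ζ)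
    {x y : Fin N → ℝ} (hy : ∀ i, 0 ≤ y i) (hts : avg y ≤ avg x) :
    ‖WithLp.toLp 2 (gameMap τ k ξ ζ x) - WithLp.toLp 2 (gameMap τ k ξ ζ y)‖ ≤
      (latency τ k ξ ζ (avg x) - latency τ k ξ ζ (avg y)) * √N +
      latencyDeriv k ξ ζ (avg x) / N * dist (WithLp.toLp 2 x) (WithLp.toLp 2 y) +
      (latencyDeriv k ξ ζ (avg x) - latencyDeriv k ξ ζ (avg y)) / N * ‖WithLp.toLp 2 y‖ := by
  have htζ : 0 ≤ avg y + ζ :=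
    add_nonneg (div_nonneg (sum_nonneg fun i _ => hy i) N.cast_nonneg) hζ
  have hℓ := sub_nonneg.2 (latency_le_latency (τ := τ) hk hξ htζ hts)
  have hℓ' := sub_nonneg.2 (latencyDeriv_le_latencyDeriv hk hξ htζ hts)
  have hℓ's := (latencyDeriv_le_latencyDeriv hk hξ htζ hts).trans'
    (by unfold latencyDeriv; positivity)
  rw [toLp_gameMap_sub]
  refine norm_add₃_le.trans_eq ?_
  rw [norm_smul, norm_smul, norm_smul, norm_toLp_const_one, Fintype.card_fin,
    Real.norm_of_nonneg hℓ, Real.norm_of_nonneg (by positivity),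
    Real.norm_of_nonneg (by positivity), ← dist_eq_norm]

lemma latencyDeriv_sub_div_mul_norm_le (hN : 1 ≤ N) {k ξ ζ s : ℝ} (hk : 0 ≤ k) (hξ : 0 ≤ ξ)
    (hζ : 0 ≤ ζ) (hreg : 1 ≤ ξ ∨ 0 < ζ) {y : Fin N → ℝ} (hy : ∀ i, y i ∈ Set.Icc (0 : ℝ) 1)
    (hts : avg y ≤ s) (hs : s ≤ 1) :
    (latencyDeriv k ξ ζ s - latencyDeriv k ξ ζ (avg y)) / N * ‖WithLp.toLp 2 y‖ ≤
      k / N * (N * (1 + ζ) ^ ξ + ξ * (1 + ζ) ^ (ξ - 1)) * (√N * (s - avg y)) := by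
  have hY : ‖WithLp.toLp 2 y‖ ≤ N * avg y := norm_toLp_le_mul_avg (by omega) fun i => (hy i).1
  have hY' : ‖WithLp.toLp 2 y‖ ≤ √N := by
    simpa using norm_le_sqrt_card_of_norm_le_one (WithLp.toLp 2 y) fun i => by
      simpa [abs_le] using ⟨by linarith [(hy i).1], (hy i).2⟩
  calc (latencyDeriv k ξ ζ s - latencyDeriv k ξ ζ (avg y)) / N * ‖WithLp.toLp 2 y‖
      = k / N * (((s + ζ) ^ ξ - (avg y + ζ) ^ ξ) * ‖WithLp.toLp 2 y‖) := by
        unfold latencyDeriv; ring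
    _ ≤ k / N * ((N * (1 + ζ) ^ ξ + ξ * (1 + ζ) ^ (ξ - 1)) * (√N * (s - avg y))) := by
        refine mul_le_mul_of_nonneg_left ?_ (by positivity)
        exact rpow_sub_rpow_mul_le (by exact_mod_cast hN) hξ hζ hreg (avg_mem_Icc hy).1 hts
          hs (norm_nonneg _) hY' hY
    _ = _ := by ring

theorem dist_gameMap_le (hN : 1 ≤ N) {τ k ξ ζ : ℝ} (hk : 0 ≤ k) (hξ : 0 ≤ ξ) (hζ : 0 ≤ ζ)
    (hreg : 1 ≤ ξ ∨ 0 < ζ) {x y : Fin N → ℝ} (hx : ∀ i, x i ∈ Set.Icc (0 : ℝ) 1)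
    (hy : ∀ i, y i ∈ Set.Icc (0 : ℝ) 1) :
    dist (WithLp.toLp 2 (gameMap τ k ξ ζ x)) (WithLp.toLp 2 (gameMap τ k ξ ζ y)) ≤
      2 * k / N * ((1 + N) * (1 + ζ) ^ ξ + ξ * (1 + ζ) ^ (ξ - 1)) *
        dist (WithLp.toLp 2 x) (WithLp.toLp 2 y) := by
  wlog hts : avg y ≤ avg x generalizing x y
  · rw [dist_comm, dist_comm (WithLp.toLp 2 x)]
    exact this hy hx (le_of_not_ge hts)
  have hs₁ := (avg_mem_Icc hx).2
  have ht₀ := (avg_mem_Icc hy).1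
  set D := dist (WithLp.toLp 2 x) (WithLp.toLp 2 y)
  set P := (1 + ζ) ^ ξ
  set Q := (1 + ζ) ^ (ξ - 1)
  have hP : 0 ≤ P := by positivity
  have hQ : 0 ≤ Q := by positivity
  have hδ : √N * (avg x - avg y) ≤ D := sqrt_mul_avg_sub_avg_le_dist x y
  have hconst := latency_sub_latency_le (τ := τ) hk hξ (by linarith : 0 ≤ avg y + ζ) hts hs₁
  have hdiag : latencyDeriv k ξ ζ (avg x) ≤ k * P :=
    latencyDeriv_le_latencyDeriv hk hξ (by linarith) hs₁
  have hweight := latencyDeriv_sub_div_mul_norm_le hN hk hξ hζ hreg hy hts hs₁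
  have hcoeff : k * P + k * P / N + k / N * (N * P + ξ * Q) ≤
      2 * k / N * ((1 + N) * P + ξ * Q) :=
    calc k * P + k * P / N + k / N * (N * P + ξ * Q) = k / N * (2 * N * P + P + ξ * Q) := by
          field_simp
          ring
      _ ≤ k / N * (2 * ((1 + N) * P + ξ * Q)) := by
          gcongr
          linarith [mul_nonneg hξ hQ]
      _ = 2 * k / N * ((1 + N) * P + ξ * Q) := by ring
  rw [dist_eq_norm]
  calc _ ≤ _ := norm_toLp_gameMap_sub_le hk hξ hζ (fun i => (hy i).1) hts
    _ ≤ k * P * (avg x - avg y) * √N + k * P / N * D +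
        k / N * (N * P + ξ * Q) * (√N * (avg x - avg y)) := by gcongr
    _ ≤ (k * P + k * P / N + k / N * (N * P + ξ * Q)) * D := by
        nlinarith [mul_le_mul_of_nonneg_left hδ (by positivity : 0 ≤ k * P),
          mul_le_mul_of_nonneg_left hδ (by positivity : 0 ≤ k / N * (N * P + ξ * Q))]
    _ ≤ 2 * k / N * ((1 + N) * P + ξ * Q) * D := by gcongr

end RoutingGame

end

theorem stmt_12_general (N : ℕ) (hN : 1 ≤ N) (τ k ξ ζ : ℝ)
    (hk : 0 ≤ k) (hξ : 0 ≤ ξ) (hζ : 0 ≤ ζ)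
    (hreg : 1 ≤ ξ ∨ 0 < ζ) :
    ∀ x y : Fin N → ℝ,
      (∀ i, x i ∈ Set.Icc (0 : ℝ) 1) → (∀ i, y i ∈ Set.Icc (0 : ℝ) 1) →
      Real.sqrt (∑ i,
        (((τ + (k / (ξ + 1)) * ((∑ j, x j) / N + ζ) ^ (ξ + 1)) +
            (1 / N) * x i * (k * ((∑ j, x j) / N + ζ) ^ ξ)) -
         ((τ + (k / (ξ + 1)) * ((∑ j, y j) / N + ζ) ^ (ξ + 1)) +
            (1 / N) * y i * (k * ((∑ j, y j) / N + ζ) ^ ξ))) ^ 2)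
      ≤ (2 * k / N) * ((1 + N) * (1 + ζ) ^ ξ + ξ * (1 + ζ) ^ (ξ - 1)) *
          Real.sqrt (∑ i, (x i - y i) ^ 2) := by
  intro x y hx hy
  have h := RoutingGame.dist_gameMap_le (τ := τ) hN hk hξ hζ hreg hx hy
  rwa [← sqrt_sum_sq_sub_eq_dist, ← sqrt_sum_sq_sub_eq_dist] at h

/-- The per-edge game mapping
`T(y)_i = ℓ(avg y) + (1/N) y_i ℓ'(avg y)` with `ℓ(σ) = τ + (k/(ξ+1))(σ+ζ)^{ξ+1}`
and `ℓ'(σ) = k(σ+ζ)^ξ` is Lipschitz on `[0,1]^N` (Euclidean norm) with constant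
`L = (2k/N)((1+N)(1+ζ)^ξ + ξ(1+ζ)^{ξ−1})`, provided `ξ ≥ 1` or `ζ > 0`. -/
theorem stmt_12 (N : ℕ) (hN : 1 ≤ N) (τ k ξ ζ : ℝ)
    (hτ : 0 ≤ τ) (hk : 0 ≤ k) (hξ : 0 ≤ ξ) (hζ : 0 ≤ ζ)
    (hreg : 1 ≤ ξ ∨ 0 < ζ) :
    ∀ x y : Fin N → ℝ,
      (∀ i, x i ∈ Set.Icc (0 : ℝ) 1) → (∀ i, y i ∈ Set.Icc (0 : ℝ) 1) →
      Real.sqrt (∑ i,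
        (((τ + (k / (ξ + 1)) * ((∑ j, x j) / N + ζ) ^ (ξ + 1)) +
            (1 / N) * x i * (k * ((∑ j, x j) / N + ζ) ^ ξ)) -
         ((τ + (k / (ξ + 1)) * ((∑ j, y j) / N + ζ) ^ (ξ + 1)) +
            (1 / N) * y i * (k * ((∑ j, y j) / N + ζ) ^ ξ))) ^ 2)
      ≤ (2 * k / N) * ((1 + N) * (1 + ζ) ^ ξ + ξ * (1 + ζ) ^ (ξ - 1)) *
          Real.sqrt (∑ i, (x i - y i) ^ 2) :=
  stmt_12_general N hN τ k ξ ζ hk hξ hζ hreg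
end

section
/- Let N ≥ 2 be an integer and ℓ : ℝ → ℝ twice continuously differentiable. Define F : ℝ^N → ℝ^N by F(y)_i := ℓ(avg(y)) + (1/N)·y_i·ℓ'(avg(y)), where avg(y) := (1/N)Σ_j y_j. Then the Jacobian matrix DF(y) is symmetric for every y ∈ ℝ^N if and only if ℓ'' ≡ 0, i.e., ℓ is affine. -/
/-!
Differentiating `F i = ℓ ∘ avg + (y_i / N) · ℓ' ∘ avg` gives
`∂_j F_i - ∂_i F_j = (y_i - y_j) ℓ''(avg y) / N²`. So the Jacobian is symmetric everywhere iff
`(y_i - y_j) ℓ''(avg y) = 0` for all `y, i, j`; since `N ≥ 2`, every `x` is the average of some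
`y` with `y_i ≠ y_j`, which forces `ℓ'' ≡ 0`.
-/

open Finset

namespace AggregativeGame

variable {N : ℕ}

noncomputable def avg (z : Fin N → ℝ) : ℝ := (∑ l, z l) / N

noncomputable def pseudogradient (ℓ : ℝ → ℝ) (i : Fin N) (z : Fin N → ℝ) : ℝ :=
  ℓ (avg z) + (1 / N) * z i * deriv ℓ (avg z)

theorem hasFDerivAt_avg (y : Fin N → ℝ) :
    HasFDerivAt avg
      ((N : ℝ)⁻¹ • ∑ l, ContinuousLinearMap.proj (R := ℝ) (φ := fun _ : Fin N ↦ ℝ) l) y := by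
  have : avg = fun z : Fin N → ℝ ↦ (N : ℝ)⁻¹ * ∑ l, z l := funext fun _ ↦ div_eq_inv_mul _ _
  rw [this]
  exact (HasFDerivAt.fun_sum fun l _ ↦ hasFDerivAt_apply l y).const_mul _

theorem fderiv_pseudogradient_apply_single {ℓ : ℝ → ℝ} {y : Fin N → ℝ}
    (hℓ : DifferentiableAt ℝ ℓ (avg y)) (hℓ' : DifferentiableAt ℝ (deriv ℓ) (avg y))
    (i j : Fin N) :
    fderiv ℝ (pseudogradient ℓ i) y (Pi.single j 1) =
      (deriv ℓ (avg y) + y i * deriv (deriv ℓ) (avg y) / N) / N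
        + if i = j then deriv ℓ (avg y) / N else 0 := by
  have hF : HasFDerivAt (pseudogradient ℓ i) _ y :=
    (hℓ.hasDerivAt.comp_hasFDerivAt y (hasFDerivAt_avg y)).add
    (((hasFDerivAt_apply (𝕜 := ℝ) (F' := fun _ : Fin N ↦ ℝ) i y).const_mul (1 / (N : ℝ))).mul
      (hℓ'.hasDerivAt.comp_hasFDerivAt y (hasFDerivAt_avg y)))
  rw [hF.fderiv]
  simp only [add_apply, smul_apply, _root_.sum_apply, ContinuousLinearMap.proj_apply,
    Pi.single_apply, sum_ite_eq', mem_univ, if_true, smul_eq_mul]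
  split_ifs <;> ring

theorem fderiv_pseudogradient_sub_swap {ℓ : ℝ → ℝ} {y : Fin N → ℝ}
    (hℓ : DifferentiableAt ℝ ℓ (avg y)) (hℓ' : DifferentiableAt ℝ (deriv ℓ) (avg y))
    (i j : Fin N) :
    fderiv ℝ (pseudogradient ℓ i) y (Pi.single j 1)
        - fderiv ℝ (pseudogradient ℓ j) y (Pi.single i 1) =
      (y i - y j) * deriv (deriv ℓ) (avg y) / N ^ 2 := by
  simp only [fderiv_pseudogradient_apply_single hℓ hℓ', eq_comm (a := j)]
  ring

theorem fderiv_pseudogradient_symm_iff [NeZero N] {ℓ : ℝ → ℝ} {y : Fin N → ℝ}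
    (hℓ : DifferentiableAt ℝ ℓ (avg y)) (hℓ' : DifferentiableAt ℝ (deriv ℓ) (avg y))
    (i j : Fin N) :
    fderiv ℝ (pseudogradient ℓ i) y (Pi.single j 1)
        = fderiv ℝ (pseudogradient ℓ j) y (Pi.single i 1) ↔
      (y i - y j) * deriv (deriv ℓ) (avg y) = 0 := by
  rw [← sub_eq_zero, fderiv_pseudogradient_sub_swap hℓ hℓ', div_eq_zero_iff]
  simp [NeZero.ne]

theorem forall_sub_mul_comp_avg_eq_zero_iff [Nontrivial (Fin N)] (g : ℝ → ℝ) :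
    (∀ (y : Fin N → ℝ) (i j : Fin N), (y i - y j) * g (avg y) = 0) ↔ ∀ x, g x = 0 := by
  refine ⟨fun h x ↦ ?_, fun h y i j ↦ by rw [h, mul_zero]⟩
  obtain ⟨i, j, hij⟩ := exists_pair_ne (Fin N)
  let y : Fin N → ℝ := fun l ↦
    x + Pi.single (M := fun _ ↦ ℝ) i 1 l - Pi.single (M := fun _ ↦ ℝ) j 1 l
  have hN : (N : ℝ) ≠ 0 := Nat.cast_ne_zero.2 i.pos.ne'
  have hy : avg y = x := by
    simp only [avg, y, sum_sub_distrib, sum_add_distrib, sum_const, card_univ, Fintype.card_fin,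
      nsmul_eq_mul, sum_pi_single', mem_univ, if_true, add_sub_cancel_right]
    field_simp
  simpa [y, hy, hij, hij.symm] using h y i j

end AggregativeGame

/-- For `N ≥ 2` and `ℓ` twice continuously differentiable, the
Jacobian of the pseudogradient `F(y)_i = ℓ(avg y) + (1/N) y_i ℓ'(avg y)` is
symmetric at every `y` if and only if `ℓ'' ≡ 0` (i.e. `ℓ` is affine). -/
theorem stmt_14 (N : ℕ) (hN : 2 ≤ N) (ℓ : ℝ → ℝ) (hC2 : ContDiff ℝ 2 ℓ) :
    (∀ y : Fin N → ℝ, ∀ i j : Fin N,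
      fderiv ℝ (fun z : Fin N → ℝ =>
          ℓ ((∑ l, z l) / N) + (1 / N) * z i * deriv ℓ ((∑ l, z l) / N)) y
        (Pi.single j 1)
      = fderiv ℝ (fun z : Fin N → ℝ =>
          ℓ ((∑ l, z l) / N) + (1 / N) * z j * deriv ℓ ((∑ l, z l) / N)) y
        (Pi.single i 1))
    ↔ (∀ x : ℝ, deriv (deriv ℓ) x = 0) := by
  have : NeZero N := ⟨by omega⟩
  have : Nontrivial (Fin N) := Fin.nontrivial_iff_two_le.2 hN
  have hℓ : Differentiable ℝ ℓ := hC2.differentiable two_ne_zero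
  have hℓ' : Differentiable ℝ (deriv ℓ) := (hC2.deriv' (n := 1)).differentiable one_ne_zero
  refine Iff.trans ?_ (AggregativeGame.forall_sub_mul_comp_avg_eq_zero_iff (N := N) _)
  exact forall_congr' fun y ↦ forall₂_congr fun i j ↦
    AggregativeGame.fderiv_pseudogradient_symm_iff hℓ.differentiableAt hℓ'.differentiableAt i j
end

section
/- Let N ≥ 1 and m ≥ 1 be integers, C ∈ ℝ^{m×m} a symmetric matrix, τ̄ ∈ ℝ^m, and for each i ∈ {1,…,N} let f_i : ℝ^m → ℝ be differentiable. For u = (u_1,…,u_N) ∈ (ℝ^m)^N define the costs J_i(u) := f_i(u_i) + τ̄ᵀu_i + avg(u)ᵀ C u_i, where avg(u) := (1/N)Σ_{j=1}^N u_j, and define p(u) := Σ_{i=1}^N (f_i(u_i) + τ̄ᵀu_i) + (1/(2N))·uᵀ((I_N + 𝟏_N 𝟏_Nᵀ) ⊗ C)u, where u is the stacked vector in ℝ^{Nm}. Then for every i and every u, ∇_{u_i} p(u) = ∇_{u_i} J_i(u); in particular p is an exact potential function for the game with costs (J_i). -/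
open Matrix Kronecker

lemma sum_dotProduct' {m N : ℕ} (g : Fin N → Fin m → ℝ) (w : Fin m → ℝ) :
    (∑ j, g j) ⬝ᵥ w = ∑ j, g j ⬝ᵥ w := by
  simp only [dotProduct, Finset.sum_apply, Finset.sum_mul]
  exact Finset.sum_comm

lemma dotProduct_sum' {m N : ℕ} (a : Fin m → ℝ) (g : Fin N → Fin m → ℝ) :
    a ⬝ᵥ (∑ j, g j) = ∑ j, a ⬝ᵥ g j := by
  simp only [dotProduct, Finset.sum_apply, Finset.mul_sum]
  exact Finset.sum_comm

lemma mulVec_sum' {m N : ℕ} (C : Matrix (Fin m) (Fin m) ℝ) (g : Fin N → Fin m → ℝ) :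
    C.mulVec (∑ j, g j) = ∑ j, C.mulVec (g j) := by
  funext k
  simp only [Matrix.mulVec, Finset.sum_apply]
  exact dotProduct_sum' _ _

lemma sum_quad {m : ℕ} (C : Matrix (Fin m) (Fin m) ℝ) {N : ℕ}
    (x : Fin N → Fin m → ℝ) :
    (∑ j, x j) ⬝ᵥ C.mulVec (∑ l, x l) = ∑ j, ∑ l, x j ⬝ᵥ C.mulVec (x l) := by
  rw [sum_dotProduct']
  exact Finset.sum_congr rfl fun j _ => by rw [mulVec_sum', dotProduct_sum']

lemma kron_quad {N m : ℕ} (A : Matrix (Fin N) (Fin N) ℝ)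
    (C : Matrix (Fin m) (Fin m) ℝ) (x : Fin N → Fin m → ℝ) :
    (fun q : Fin N × Fin m => x q.1 q.2) ⬝ᵥ
      ((A ⊗ₖ C).mulVec (fun q : Fin N × Fin m => x q.1 q.2))
    = ∑ j, ∑ l, A j l * (x j ⬝ᵥ C.mulVec (x l)) := by
  simp only [dotProduct, Matrix.mulVec, Matrix.kroneckerMap_apply,
    Fintype.sum_prod_type, Finset.mul_sum, Finset.sum_mul]
  refine Finset.sum_congr rfl fun j _ => ?_
  rw [Finset.sum_comm]
  refine Finset.sum_congr rfl fun l _ => Finset.sum_congr rfl fun k _ =>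
    Finset.sum_congr rfl fun r _ => by ring

lemma update_sum {α : Type*} [AddCommMonoid α] {N : ℕ} {β : Type*}
    (i : Fin N) (u : Fin N → β) (v : β) (g : Fin N → β → α) :
    ∑ j, g j (Function.update u i v j)
      = g i v + ∑ j ∈ Finset.univ.erase i, g j (u j) := by
  rw [← Finset.add_sum_erase Finset.univ _ (Finset.mem_univ i), Function.update_self]
  congr 1
  exact Finset.sum_congr rfl fun j hj => by
    rw [Function.update_of_ne (Finset.ne_of_mem_erase hj)]

/-- For the game with costs
`J i u = f i (u i) + τ̄ᵀ u_i + avg(u)ᵀ C u_i`, the function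
`p(u) = ∑_i (f i (u i) + τ̄ᵀ u_i) + (1/(2N)) uᵀ((I_N + 𝟏𝟏ᵀ) ⊗ C) u`
(with `u` the stacked vector) satisfies `∇_{u_i} p = ∇_{u_i} J_i` for all `i`
and all `u`; i.e. `p` is an exact potential. -/
theorem stmt_15 (N m : ℕ) (hN : 1 ≤ N) (hm : 1 ≤ m)
    (C : Matrix (Fin m) (Fin m) ℝ) (hC : C.IsSymm)
    (τbar : Fin m → ℝ)
    (f : Fin N → (Fin m → ℝ) → ℝ)
    (hf : ∀ i, Differentiable ℝ (f i)) :
    ∀ (i : Fin N) (u : Fin N → Fin m → ℝ),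
      fderiv ℝ (fun v : Fin m → ℝ =>
        (∑ j, (f j (Function.update u i v j) + τbar ⬝ᵥ Function.update u i v j)) +
          (1 / (2 * (N : ℝ))) *
            ((fun q : Fin N × Fin m => Function.update u i v q.1 q.2) ⬝ᵥ
              ((((1 : Matrix (Fin N) (Fin N) ℝ) + Matrix.of fun _ _ => (1 : ℝ)) ⊗ₖ C).mulVec
                (fun q : Fin N × Fin m => Function.update u i v q.1 q.2)))) (u i)
      =
      fderiv ℝ (fun v : Fin m → ℝ =>
        f i v + τbar ⬝ᵥ v +
          ((fun k => (∑ j, Function.update u i v j k) / N) ⬝ᵥ C.mulVec v)) (u i) := by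
  intro i u
  have hN0 : (N : ℝ) ≠ 0 := Nat.cast_ne_zero.mpr (by omega)
  have Qsym : ∀ a b : Fin m → ℝ, a ⬝ᵥ C.mulVec b = b ⬝ᵥ C.mulVec a := by
    intro a b
    rw [Matrix.dotProduct_mulVec, ← Matrix.mulVec_transpose, hC, dotProduct_comm]
  set s : Fin m → ℝ := ∑ j ∈ Finset.univ.erase i, u j with hs
  set c : ℝ :=
    (∑ j ∈ Finset.univ.erase i, (f j (u j) + τbar ⬝ᵥ u j)) +
      (1 / (2 * (N : ℝ))) *
        ((∑ j ∈ Finset.univ.erase i, (u j ⬝ᵥ C.mulVec (u j))) + s ⬝ᵥ C.mulVec s) with hc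
  have key : ∀ v : Fin m → ℝ,
      (∑ j, (f j (Function.update u i v j) + τbar ⬝ᵥ Function.update u i v j)) +
          (1 / (2 * (N : ℝ))) *
            ((fun q : Fin N × Fin m => Function.update u i v q.1 q.2) ⬝ᵥ
              ((((1 : Matrix (Fin N) (Fin N) ℝ) + Matrix.of fun _ _ => (1 : ℝ)) ⊗ₖ C).mulVec
                (fun q : Fin N × Fin m => Function.update u i v q.1 q.2)))
      = (f i v + τbar ⬝ᵥ v +
          ((fun k => (∑ j, Function.update u i v j k) / N) ⬝ᵥ C.mulVec v)) + c := by
    intro v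
    set x : Fin N → Fin m → ℝ := Function.update u i v with hx
    -- the sum of updated vectors
    have hS : (∑ j, x j) = v + s := by
      rw [hx, update_sum i u v (fun _ w => w), hs]
    -- linear/f part
    have h1 : (∑ j, (f j (x j) + τbar ⬝ᵥ x j))
        = (f i v + τbar ⬝ᵥ v) + ∑ j ∈ Finset.univ.erase i, (f j (u j) + τbar ⬝ᵥ u j) :=
      update_sum i u v (fun j w => f j w + τbar ⬝ᵥ w)
    -- diagonal quadratic part
    have h2 : (∑ j, x j ⬝ᵥ C.mulVec (x j))
        = (v ⬝ᵥ C.mulVec v) + ∑ j ∈ Finset.univ.erase i, (u j ⬝ᵥ C.mulVec (u j)) :=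
      update_sum i u v (fun _ w => w ⬝ᵥ C.mulVec w)
    -- full quadratic part
    have h3 : (fun q : Fin N × Fin m => x q.1 q.2) ⬝ᵥ
          ((((1 : Matrix (Fin N) (Fin N) ℝ) + Matrix.of fun _ _ => (1 : ℝ)) ⊗ₖ C).mulVec
            (fun q : Fin N × Fin m => x q.1 q.2))
        = (∑ j, x j ⬝ᵥ C.mulVec (x j)) + (v + s) ⬝ᵥ C.mulVec (v + s) := by
      rw [kron_quad, ← hS, sum_quad, ← Finset.sum_add_distrib]
      refine Finset.sum_congr rfl fun j _ => ?_
      simp only [Matrix.add_apply, Matrix.one_apply, Matrix.of_apply, add_mul, one_mul,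
        Finset.sum_add_distrib, ite_mul, zero_mul, Finset.sum_ite_eq, Finset.mem_univ, if_true]
    -- the averaged term
    have h4 : ((fun k => (∑ j, x j k) / N) ⬝ᵥ C.mulVec v)
        = (1 / (N : ℝ)) * ((v + s) ⬝ᵥ C.mulVec v) := by
      have hk : ∀ k, (∑ j, x j k) = (v + s) k := by
        intro k; rw [← hS]; exact (Finset.sum_apply k Finset.univ x).symm
      simp only [hk, dotProduct, Finset.mul_sum]
      exact Finset.sum_congr rfl fun k _ => by ring
    rw [h1, h3, h2, h4, hc]
    have e1 : (v + s) ⬝ᵥ C.mulVec (v + s)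
        = v ⬝ᵥ C.mulVec v + 2 * (s ⬝ᵥ C.mulVec v) + s ⬝ᵥ C.mulVec s := by
      rw [add_dotProduct, Matrix.mulVec_add, dotProduct_add, dotProduct_add,
        Qsym v s]
      ring
    have e2 : (v + s) ⬝ᵥ C.mulVec v = v ⬝ᵥ C.mulVec v + s ⬝ᵥ C.mulVec v := by
      rw [add_dotProduct]
    rw [e1, e2]
    field_simp
    ring
  simp only [key]
  exact fderiv_add_const c
end

section
/- Let n, N ≥ 1 be integers and, for each i ∈ {1,…,N}, let d_i ∈ {1,…,n} and x_i ∈ ℝⁿ be such that x_i + e_{d_i} ∈ Δⁿ. Let x ∈ ℝ^{Nn} be the stacked vector of (x_1,…,x_N). Then Σ_{i=1}^N |[x_i]_{d_i}| ≥ ‖x‖₂/(N·n). -/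
/-- If each deviation `x i` satisfies `x i + e_{d i} ∈ Δⁿ`, then
`∑_i |[x i]_{d i}| ≥ ‖x‖₂/(N·n)` where `x` is the stacked vector. -/
theorem stmt_17 (n N : ℕ) (hn : 1 ≤ n) (hN : 1 ≤ N)
    (d : Fin N → Fin n) (x : Fin N → Fin n → ℝ)
    (hsimplex : ∀ i,
      (∀ a, 0 ≤ x i a + (Pi.single (d i) 1 : Fin n → ℝ) a ∧
        x i a + (Pi.single (d i) 1 : Fin n → ℝ) a ≤ 1) ∧
      ∑ a, (x i a + (Pi.single (d i) 1 : Fin n → ℝ) a) = 1) :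
    Real.sqrt (∑ i, ∑ a, (x i a) ^ 2) / (N * n) ≤ ∑ i, |x i (d i)| := by
  set T := ∑ i, |x i (d i)| with hT
  have hT0 : 0 ≤ T := Finset.sum_nonneg fun i _ => abs_nonneg _
  have key : ∀ i a, |x i a| ≤ |x i (d i)| := by
    intro i a
    obtain ⟨hb, hs⟩ := hsimplex i
    have hsum : ∑ a', x i a' = 0 := by
      have h1 : ∑ a', (Pi.single (d i) 1 : Fin n → ℝ) a' = 1 := by simp
      rw [Finset.sum_add_distrib, h1] at hs
      linarith
    have hdle : x i (d i) ≤ 0 := by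
      have := (hb (d i)).2
      simp at this; linarith
    by_cases h : a = d i
    · rw [h]
    · have ha0 : 0 ≤ x i a := by
        have := (hb a).1
        simpa [Pi.single_apply, h] using this
      have hpair : x i a + x i (d i) ≤ 0 := by
        have hsub : ({a, d i} : Finset (Fin n)) ⊆ Finset.univ := Finset.subset_univ _
        have h2 : ∑ a' ∈ ({a, d i} : Finset (Fin n)), x i a' ≤ ∑ a', x i a' := by
          apply Finset.sum_le_sum_of_subset_of_nonneg hsub
          intro a' _ ha'
          simp [Finset.mem_insert, Finset.mem_singleton] at ha'
          have := (hb a').1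
          simpa [Pi.single_apply, ha'.2] using this
        rw [Finset.sum_pair h, hsum] at h2
        exact h2
      rw [abs_of_nonneg ha0, abs_of_nonpos hdle]
      linarith
  have hkeyT : ∀ i a, |x i a| ≤ T := by
    intro i a
    refine (key i a).trans ?_
    exact Finset.single_le_sum (f := fun j => |x j (d j)|)
      (fun j _ => abs_nonneg _) (Finset.mem_univ i)
  have hS : ∑ i, ∑ a, (x i a) ^ 2 ≤ (N : ℝ) * n * T ^ 2 := by
    have : ∑ i : Fin N, ∑ a : Fin n, (x i a) ^ 2 ≤ ∑ _i : Fin N, ∑ _a : Fin n, T ^ 2 := by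
      refine Finset.sum_le_sum fun i _ => Finset.sum_le_sum fun a _ => ?_
      calc (x i a) ^ 2 = |x i a| ^ 2 := (sq_abs _).symm
        _ ≤ T ^ 2 := pow_le_pow_left₀ (abs_nonneg _) (hkeyT i a) 2
    simpa [Finset.sum_const, mul_comm, mul_assoc, mul_left_comm] using this
  have h1N : (1 : ℝ) ≤ N := by exact_mod_cast hN
  have h1n : (1 : ℝ) ≤ n := by exact_mod_cast hn
  have hNn : (0 : ℝ) < (N : ℝ) * n := by nlinarith
  rw [div_le_iff₀ hNn]
  have hS2 : ∑ i, ∑ a, (x i a) ^ 2 ≤ (T * ((N : ℝ) * n)) ^ 2 := by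
    have hfac : (0:ℝ) ≤ (N : ℝ) * n * T ^ 2 * ((N : ℝ) * n - 1) :=
      mul_nonneg (mul_nonneg hNn.le (sq_nonneg T)) (by nlinarith)
    have : (N : ℝ) * n * T ^ 2 ≤ ((N : ℝ) * n) ^ 2 * T ^ 2 := by nlinarith
    nlinarith
  calc Real.sqrt (∑ i, ∑ a, (x i a) ^ 2) ≤ Real.sqrt ((T * ((N : ℝ) * n)) ^ 2) :=
        Real.sqrt_le_sqrt hS2
    _ = T * ((N : ℝ) * n) := Real.sqrt_sq (by positivity)
end

section
/- Let S be a finite set, d ∈ S, and P : S → S with P(d) = d and P^t(a) = d for all a ∈ S and all t ≥ T₀ for some T₀ ∈ ℕ. Let τ : S → ℝ_{≥0} with τ(d) = 0 and k(a) := Σ_{t=0}^{T₀−1} τ(P^t(a)). For any x : S → ℝ, define x⁺ : S → ℝ by x⁺(b) := Σ_{a ∈ S, P(a)=b} (x(a) − δ_d(a)), where δ_d(a) = 1 if a = d and 0 otherwise. Then Σ_{a∈S} k(a)·x(a) = Σ_{a∈S} τ(a)·x(a) + Σ_{b∈S} k(b)·x⁺(b). -/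
/-!
Shifting the known path by one edge gives `k (P a) = k a - τ a`, because the path from any node
reaches `d` within `T₀` steps and `τ d = 0`. Summing `k (P a) (x a - δ_d a)` over the fibres of `P`
therefore yields `∑ k x - ∑ τ x - k (P d)`, and `k (P d) = k d = 0` since `d` is a fixed point of `P`.
-/

open Finset

section

variable {S : Type*}

theorem Function.isFixedPt_of_iterate_eventually_const {P : S → S} {d : S} {T₀ : ℕ}
    (hT : ∀ t, T₀ ≤ t → P^[t] d = d) : Function.IsFixedPt P d := by
  have h := hT (T₀ + 1) (Nat.le_succ T₀)
  rwa [Function.iterate_succ_apply', hT T₀ le_rfl] at h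

theorem Finset.sum_range_iterate_apply_add {M : Type*} [AddCommMonoid M] (P : S → S)
    (τ : S → M) (T : ℕ) (a : S) :
    ∑ t ∈ range T, τ (P^[t] (P a)) + τ a = ∑ t ∈ range T, τ (P^[t] a) + τ (P^[T] a) := by
  rw [← sum_range_succ, sum_range_succ']
  rfl

theorem Finset.sum_mul_sum_fiber {R : Type*} [NonUnitalNonAssocSemiring R] [Fintype S]
    [DecidableEq S] (P : S → S) (f g : S → R) :
    ∑ b : S, f b * ∑ a ∈ univ.filter (fun a => P a = b), g a = ∑ a : S, f (P a) * g a := by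
  rw [← sum_fiberwise univ P fun a => f (P a) * g a]
  refine sum_congr rfl fun b _ => ?_
  rw [mul_sum]
  exact sum_congr rfl fun a ha => by rw [(mem_filter.mp ha).2]

end

theorem stmt_19_general {S : Type*} [Fintype S] [DecidableEq S] (d : S) (P : S → S)
    (T₀ : ℕ)
    (hT : ∀ a : S, ∀ t : ℕ, T₀ ≤ t → P^[t] a = d)
    (τ : S → ℝ) (hτd : τ d = 0)
    (x : S → ℝ) :
    ∑ a : S, (∑ t ∈ Finset.range T₀, τ (P^[t] a)) * x a
      = (∑ a : S, τ a * x a) +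
        ∑ b : S, (∑ t ∈ Finset.range T₀, τ (P^[t] b)) *
          (∑ a ∈ Finset.univ.filter (fun a : S => P a = b),
            (x a - if a = d then (1 : ℝ) else 0)) := by
  set k : S → ℝ := fun a => ∑ t ∈ Finset.range T₀, τ (P^[t] a)
  have hPd : P d = d := Function.isFixedPt_of_iterate_eventually_const (hT d)
  have hkP (a : S) : k (P a) = k a - τ a := by
    have h := sum_range_iterate_apply_add P τ T₀ a
    rw [hT a T₀ le_rfl, hτd, add_zero] at h
    exact eq_sub_of_add_eq h
  have hkd : k d = 0 := by
    simp only [k, Function.iterate_fixed hPd, hτd, sum_const_zero]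
  rw [sum_mul_sum_fiber P k]
  simp only [hkP, mul_sub, sub_mul, mul_ite, mul_one, mul_zero, sum_sub_distrib,
    sum_ite_eq', mem_univ, if_true, hkd, hτd]
  ring

/-- With `P`, `d`, `τ`, `k` as in the known-path setting and
`x⁺(b) = ∑_{a : P a = b} (x a − δ_d(a))` the one-step update of a deviation
`x`, one has the telescoping identity
`∑_a k(a) x(a) = ∑_a τ(a) x(a) + ∑_b k(b) x⁺(b)`. -/
theorem stmt_19 {S : Type*} [Fintype S] [DecidableEq S] (d : S) (P : S → S)
    (hPd : P d = d) (T₀ : ℕ)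
    (hT : ∀ a : S, ∀ t : ℕ, T₀ ≤ t → P^[t] a = d)
    (τ : S → ℝ) (hτ : ∀ a, 0 ≤ τ a) (hτd : τ d = 0)
    (x : S → ℝ) :
    ∑ a : S, (∑ t ∈ Finset.range T₀, τ (P^[t] a)) * x a
      = (∑ a : S, τ a * x a) +
        ∑ b : S, (∑ t ∈ Finset.range T₀, τ (P^[t] b)) *
          (∑ a ∈ Finset.univ.filter (fun a : S => P a = b),
            (x a - if a = d then (1 : ℝ) else 0)) :=
  stmt_19_general d P T₀ hT τ hτd x
end
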